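/- arXiv:2410.17057 — 7 statements merged into one kernel-verified Lean document; each statement's English description precedes it below -/
import Mathlib

section
/- For every n ≥ 1, the sorting class of the 1-\underline{23}-avoiding stack-sorting map equals the set of permutations of length n avoiding the classical patterns 132, 3214, and 4213; that is, Sort_n(sc_{1\underline{23}}) = Av_n(132, 3214, 4213). -/
/-- `τ` contains the vincular pattern with entries `σ` and adjacency-constraint set `A`:
there is an occurrence of the classical pattern `σ` in `τ` (a strictly increasing choice of
positions carrying entries order-isomorphic to `σ`) such that for every `a ∈ A`, the
occurrence positions corresponding to entries `a` and `a + 1` of `σ` are adjacent in `τ`.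
Classical patterns correspond to `A = ∅`. -/
def ContainsV (σ : List ℕ) (A : Set ℕ) (τ : List ℕ) : Prop :=
  ∃ f : Fin σ.length → Fin τ.length,
    StrictMono f ∧
    (∀ a b : Fin σ.length, σ.get a < σ.get b ↔ τ.get (f a) < τ.get (f b)) ∧
    ∀ a : ℕ, a ∈ A → ∀ h : a + 1 < σ.length,
      (f ⟨a + 1, h⟩ : ℕ) = (f ⟨a, Nat.lt_of_succ_lt h⟩ : ℕ) + 1

open Classical in
/-- The `σ`-avoiding stack pass: `scAux σ A stack input` where the stack is recorded
top-to-bottom; the next input element is pushed when the stack contents together with the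
new element on top avoid the vincular pattern `(σ, A)`, and otherwise the top of the stack
is popped to the output; at the end the remaining stack entries are popped to the output. -/
noncomputable def scAux (σ : List ℕ) (A : Set ℕ) : List ℕ → List ℕ → List ℕ
  | stack, [] => stack
  | [], x :: rest => scAux σ A [x] rest
  | y :: stack', x :: rest =>
    if ContainsV σ A (x :: y :: stack') then
      y :: scAux σ A stack' (x :: rest)
    else
      scAux σ A (x :: y :: stack') rest
termination_by stack input => stack.length + 2 * input.length
decreasing_by all_goals (simp only [List.length_cons, List.length_nil]; omega)

/-- The `(σ, A)`-avoiding stack-sorting map `sc_{(σ, A)}`. -/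
noncomputable def sc (σ : List ℕ) (A : Set ℕ) (τ : List ℕ) : List ℕ :=
  scAux σ A [] τ

/-- `τ` is (the one-line notation of) a permutation of `{1, …, n}`. -/
def IsPermList (n : ℕ) (τ : List ℕ) : Prop :=
  τ.Perm (List.range' 1 n)

/-- The sorting class `Sort_n(sc_{(σ, A)})`: permutations of length `n` whose image under
`sc_{(σ, A)}` avoids the classical pattern `231`. -/
def SortSet (σ : List ℕ) (A : Set ℕ) (n : ℕ) : Set (List ℕ) :=
  {τ | IsPermList n τ ∧ ¬ ContainsV [2, 3, 1] ∅ (sc σ A τ)}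

namespace SccAux
open List

/-- u contains classical 132. -/
def Has132 (u : List ℕ) : Prop := ∃ a b c : ℕ, a < b ∧ b < c ∧ [a, c, b] <+ u
/-- merged pattern: 321 followed by an element bigger than the middle. -/
def HasM (u : List ℕ) : Prop := ∃ a b c e : ℕ, a < b ∧ b < c ∧ b < e ∧ [c, b, a, e] <+ u
def Has231 (u : List ℕ) : Prop := ∃ a b c : ℕ, a < b ∧ b < c ∧ [b, c, a] <+ u
def Has3214 (u : List ℕ) : Prop := ∃ a b c d : ℕ, a < b ∧ b < c ∧ c < d ∧ [c, b, a, d] <+ u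
def Has4213 (u : List ℕ) : Prop := ∃ a b c d : ℕ, a < b ∧ b < c ∧ c < d ∧ [d, b, a, c] <+ u
def Bad (u : List ℕ) : Prop := Has132 u ∨ HasM u
def F1 (v : ℕ) (u : List ℕ) : Prop := ∃ a b : ℕ, a < v ∧ v < b ∧ [a, b] <+ u
def F2 (v : ℕ) (u : List ℕ) : Prop := ∃ a b c : ℕ, a < v ∧ v < b ∧ b < c ∧ [c, b, a] <+ u
def Fallible (v : ℕ) (u : List ℕ) : Prop := F1 v u ∨ F2 v u
def HasFall (v : ℕ) (u : List ℕ) : Prop := ∃ a b : ℕ, b < v ∧ v < a ∧ [a, b] <+ u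
/-- adjacent descent followed (later) by a smaller element -/
def HasDD (u : List ℕ) : Prop :=
  ∃ (c d e : ℕ) (l₁ l₂ l₃ : List ℕ), u = l₁ ++ c :: d :: l₂ ++ e :: l₃ ∧ d < c ∧ e < d
/-- vincular 1-23 occurrence, decomposition form -/
def VincD (L : List ℕ) : Prop :=
  ∃ (e f g : ℕ) (l₁ l₂ l₃ : List ℕ), L = l₁ ++ e :: l₂ ++ f :: g :: l₃ ∧ e < f ∧ f < g
/-- pop condition: an adjacent descent with bottom above x -/
def PopC (x : ℕ) (u : List ℕ) : Prop :=
  ∃ (c d : ℕ) (l₁ l₂ : List ℕ), u = l₁ ++ c :: d :: l₂ ∧ d < c ∧ x < d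

/- ### sublist toolkit -/

lemma sub1 {a : ℕ} {L : List ℕ} (h : a ∈ L) : [a] <+ L := List.singleton_sublist.2 h

lemma sub_right {l L₁ L₂ : List ℕ} (h : l <+ L₂) : l <+ L₁ ++ L₂ :=
  h.trans (List.sublist_append_right _ _)

lemma sub2 {a b : ℕ} {L₁ L₂ : List ℕ} (ha : a ∈ L₁) (hb : b ∈ L₂) : [a, b] <+ L₁ ++ L₂ :=
  (sub1 ha).append (sub1 hb)

lemma sub3 {a b c : ℕ} {L₁ L₂ L₃ : List ℕ} (ha : a ∈ L₁) (hb : b ∈ L₂) (hc : c ∈ L₃) :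
    [a, b, c] <+ L₁ ++ L₂ ++ L₃ :=
  (sub2 ha hb).append (sub1 hc)

lemma sub4 {a b c d : ℕ} {L₁ L₂ L₃ L₄ : List ℕ} (ha : a ∈ L₁) (hb : b ∈ L₂) (hc : c ∈ L₃)
    (hd : d ∈ L₄) : [a, b, c, d] <+ L₁ ++ L₂ ++ L₃ ++ L₄ :=
  (sub3 ha hb hc).append (sub1 hd)

lemma nodup_ne {a b : ℕ} {u : List ℕ} (hnd : u.Nodup) (h : [a, b] <+ u) : a ≠ b := by
  have := (hnd.sublist h)
  simp at this; exact this

lemma sub_of_noY {l A B : List ℕ} {y : ℕ} (h : l <+ A ++ y :: B) (hy : y ∉ l) : l <+ A ++ B := by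
  rcases List.sublist_append_iff.1 h with ⟨l₁, l₂, rfl, h₁, h₂⟩
  rcases List.sublist_cons_iff.1 h₂ with h₂' | ⟨r, rfl, hr⟩
  · exact h₁.append h₂'
  · exact absurd (by simp) hy

lemma splitY {l A B : List ℕ} {y : ℕ} (h : l <+ A ++ y :: B) :
    l <+ A ++ B ∨ ∃ l₁ l₂, l = l₁ ++ y :: l₂ ∧ l₁ <+ A ∧ l₂ <+ B := by
  rcases List.sublist_append_iff.1 h with ⟨l₁, l₂, rfl, h₁, h₂⟩
  rcases List.sublist_cons_iff.1 h₂ with h₂' | ⟨r, rfl, hr⟩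
  · exact Or.inl (h₁.append h₂')
  · exact Or.inr ⟨l₁, r, rfl, h₁, hr⟩

lemma rev_sub {l u : List ℕ} : l <+ u.reverse ↔ l.reverse <+ u := by
  constructor
  · intro h; simpa using h.reverse
  · intro h; simpa using h.reverse

/- ### minimum with adjacent descent -/

lemma minDesc : ∀ (W : List ℕ), W ≠ [] →
    ∃ m, (∀ z ∈ W, m ≤ z) ∧
      ((∃ T, W = m :: T) ∨ ∃ P xx Q, W = P ++ xx :: m :: Q ∧ m < xx) := by
  intro W
  induction W with
  | nil => intro h; exact absurd rfl h
  | cons w t ih =>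
    intro _
    rcases eq_or_ne t [] with rfl | ht
    · exact ⟨w, by simp, Or.inl ⟨[], rfl⟩⟩
    · obtain ⟨m', hmin', hdis⟩ := ih ht
      by_cases hw : w ≤ m'
      · refine ⟨w, ?_, Or.inl ⟨t, rfl⟩⟩
        intro z hz
        rcases List.mem_cons.1 hz with rfl | hz
        · exact le_refl _
        · exact le_trans hw (hmin' z hz)
      · push_neg at hw
        refine ⟨m', ?_, Or.inr ?_⟩
        · intro z hz
          rcases List.mem_cons.1 hz with rfl | hz
          · exact le_of_lt hw
          · exact hmin' z hz
        · rcases hdis with ⟨T, rfl⟩ | ⟨P, xx, Q, rfl, hlt⟩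
          · exact ⟨[], w, T, rfl, hw⟩
          · exact ⟨w :: P, xx, Q, rfl, hlt⟩

end SccAux
namespace SccAux
open List

lemma core {u : List ℕ} (hnd : u.Nodup) (hdd : ¬HasDD u) {a b c : ℕ}
    (hsub : [a, b, c] <+ u) (hba : b < a) (hcb : c < b) :
    ∃ m, m < c ∧ [m, b, c] <+ u := by
  rcases List.cons_sublist_iff.1 hsub with ⟨r₁, r₂, hu, ha, h2⟩
  rcases List.cons_sublist_iff.1 h2 with ⟨s₁, s₂, hr₂, hbm, h3⟩
  have hcm : c ∈ s₂ := List.singleton_sublist.1 h3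
  obtain ⟨p₁, p₂, rfl⟩ := List.append_of_mem ha
  obtain ⟨q₁, q₂, rfl⟩ := List.append_of_mem hbm
  obtain ⟨t₁, t₂, rfl⟩ := List.append_of_mem hcm
  subst hr₂
  set W : List ℕ := (a :: (p₂ ++ q₁)) ++ [b] with hW
  have hWu : u = p₁ ++ W ++ (q₂ ++ t₁ ++ c :: t₂) := by rw [hu, hW]; simp
  obtain ⟨m, hmin, hdis⟩ := minDesc W (by simp [hW])
  have hmb : m ≤ b := hmin b (by simp [hW])
  rcases hdis with ⟨T, hT⟩ | ⟨P, xx, Q, hPQ, hmxx⟩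
  · -- m is the head a, contradiction with b < a
    rw [hW] at hT
    simp only [List.cons_append, List.cons.injEq] at hT
    omega
  · -- adjacent descent (xx, m) inside W
    have hgrp1 : u = (p₁ ++ P) ++ xx :: m :: ((Q ++ q₂ ++ t₁) ++ c :: t₂) := by
      rw [hWu, hPQ]; simp
    have hmc : m < c := by
      have hne : m ≠ c := by
        apply nodup_ne (hnd := hnd)
        rw [hgrp1]
        apply sub_right
        apply List.Sublist.cons
        apply List.Sublist.cons₂
        exact sub_right (sub1 (by simp))
      have hnlt : ¬ c < m := by
        intro hcm'
        exact hdd ⟨xx, m, c, p₁ ++ P, Q ++ q₂ ++ t₁, t₂, by rw [hgrp1]; simp, hmxx, hcm'⟩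
      omega
    -- Q must end with b
    have hQne : Q ≠ [] := by
      rintro rfl
      have h1 : (P ++ [xx]) ++ [m] = (a :: (p₂ ++ q₁)) ++ [b] := by
        rw [← hW, hPQ]; simp
      have := (List.append_inj' h1 rfl).2
      simp at this; omega
    obtain ⟨Q₀, bq, hQ⟩ := Q.eq_nil_or_concat.resolve_left hQne
    rw [List.concat_eq_append] at hQ
    subst hQ
    have h1 : (P ++ xx :: m :: Q₀) ++ [bq] = (a :: (p₂ ++ q₁)) ++ [b] := by
      rw [← hW, hPQ]; simp
    have hbq : bq = b := by
      have := (List.append_inj' h1 rfl).2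
      simpa using this
    subst hbq
    refine ⟨m, hmc, ?_⟩
    have hgrp2 : u = (p₁ ++ P ++ [xx]) ++ (m :: Q₀) ++ (bq :: q₂ ++ t₁) ++ (c :: t₂) := by
      rw [hWu, hPQ]; simp
    rw [hgrp2]
    exact sub3 (L₁ := p₁ ++ P ++ [xx] ++ (m :: Q₀)) (by simp) (by simp) (by simp)

lemma core132 {u : List ℕ} (hnd : u.Nodup) (hdd : ¬HasDD u) {a b c : ℕ}
    (hsub : [a, b, c] <+ u) (hba : b < a) (hcb : c < b) : Has132 u := by
  obtain ⟨m, hmc, hs⟩ := core hnd hdd hsub hba hcb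
  exact ⟨m, c, b, hmc, hcb, hs⟩

lemma sub_init2 {p q r : ℕ} {u : List ℕ} (h : [p, q, r] <+ u) : [p, q] <+ u := by
  have h0 : [p, q] <+ [p, q, r] := by
    have := List.sublist_append_left [p, q] [r]; simpa using this
  exact h0.trans h

lemma sub_init3 {p q r s : ℕ} {u : List ℕ} (h : [p, q, r, s] <+ u) : [p, q, r] <+ u := by
  have h0 : [p, q, r] <+ [p, q, r, s] := by
    have := List.sublist_append_left [p, q, r] [s]; simpa using this
  exact h0.trans h

lemma M2base {u : List ℕ} (hnd : u.Nodup) (hdd : ¬HasDD u) (h : HasM u) : Has132 u := by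
  obtain ⟨a, b, c, e, hab, hbc, hbe, hs⟩ := h
  exact core132 hnd hdd (sub_init3 hs) hbc hab

lemma M1base {u : List ℕ} (hnd : u.Nodup) (hdd : ¬HasDD u) {v : ℕ} (h : F2 v u) : F1 v u := by
  obtain ⟨a, b, c, hav, hvb, hbc, hs⟩ := h
  obtain ⟨m, hma, hms⟩ := core hnd hdd hs hbc (by omega)
  exact ⟨m, b, by omega, hvb, sub_init2 hms⟩

end SccAux
namespace SccAux
open List

/- ### monotonicity -/
lemma F1_mono {v : ℕ} {u u' : List ℕ} (h : u <+ u') : F1 v u → F1 v u' := by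
  rintro ⟨a, b, h1, h2, hs⟩; exact ⟨a, b, h1, h2, hs.trans h⟩
lemma F2_mono {v : ℕ} {u u' : List ℕ} (h : u <+ u') : F2 v u → F2 v u' := by
  rintro ⟨a, b, c, h1, h2, h3, hs⟩; exact ⟨a, b, c, h1, h2, h3, hs.trans h⟩
lemma Fallible_mono {v : ℕ} {u u' : List ℕ} (h : u <+ u') : Fallible v u → Fallible v u' := by
  rintro (h' | h'); exacts [Or.inl (F1_mono h h'), Or.inr (F2_mono h h')]
lemma Has132_mono {u u' : List ℕ} (h : u <+ u') : Has132 u → Has132 u' := by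
  rintro ⟨a, b, c, h1, h2, hs⟩; exact ⟨a, b, c, h1, h2, hs.trans h⟩
lemma HasM_mono {u u' : List ℕ} (h : u <+ u') : HasM u → HasM u' := by
  rintro ⟨a, b, c, e, h1, h2, h3, hs⟩; exact ⟨a, b, c, e, h1, h2, h3, hs.trans h⟩
lemma Bad_mono {u u' : List ℕ} (h : u <+ u') : Bad u → Bad u' := by
  rintro (h' | h'); exacts [Or.inl (Has132_mono h h'), Or.inr (HasM_mono h h')]

lemma ne_of_memAB {a₁ a₂ : ℕ} {A B : List ℕ} (hnd : (A ++ B).Nodup)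
    (h₁ : a₁ ∈ A) (h₂ : a₂ ∈ B) : a₁ ≠ a₂ := by
  intro h; subst h
  exact (List.disjoint_of_nodup_append hnd) h₁ h₂

/- ### splitting occurrences across A ++ y :: B -/

lemma splitPair {p q y : ℕ} {A B : List ℕ} (h : [p, q] <+ A ++ y :: B) :
    [p, q] <+ A ++ B ∨ (p = y ∧ q ∈ B) ∨ (q = y ∧ p ∈ A) := by
  rcases splitY h with h' | ⟨l₁, l₂, heq, h₁, h₂⟩
  · exact Or.inl h'
  rcases l₁ with _ | ⟨a1, l₁⟩
  · simp only [List.nil_append, List.cons.injEq] at heq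
    obtain ⟨rfl, rfl⟩ := heq
    exact Or.inr <| Or.inl ⟨rfl, by simpa using h₂⟩
  rcases l₁ with _ | ⟨a2, l₁⟩
  · simp only [List.cons_append, List.nil_append, List.cons.injEq] at heq
    obtain ⟨rfl, rfl, rfl⟩ := heq
    exact Or.inr <| Or.inr ⟨rfl, by simpa using h₁⟩
  · exfalso
    have := congrArg List.length heq
    simp only [List.length_append, List.length_cons, List.length_nil] at this
    omega

lemma splitTriple {p q s y : ℕ} {A B : List ℕ} (h : [p, q, s] <+ A ++ y :: B) :
    [p, q, s] <+ A ++ B ∨ (p = y ∧ [q, s] <+ B) ∨ (q = y ∧ p ∈ A ∧ s ∈ B)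
      ∨ (s = y ∧ [p, q] <+ A) := by
  rcases splitY h with h' | ⟨l₁, l₂, heq, h₁, h₂⟩
  · exact Or.inl h'
  rcases l₁ with _ | ⟨a1, l₁⟩
  · simp only [List.nil_append, List.cons.injEq] at heq
    obtain ⟨rfl, rfl⟩ := heq
    exact Or.inr <| Or.inl ⟨rfl, h₂⟩
  rcases l₁ with _ | ⟨a2, l₁⟩
  · simp only [List.cons_append, List.nil_append, List.cons.injEq] at heq
    obtain ⟨rfl, rfl, rfl⟩ := heq
    exact Or.inr <| Or.inr <| Or.inl ⟨rfl, by simpa using h₁, by simpa using h₂⟩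
  rcases l₁ with _ | ⟨a3, l₁⟩
  · simp only [List.cons_append, List.nil_append, List.cons.injEq] at heq
    obtain ⟨rfl, rfl, rfl, rfl⟩ := heq
    exact Or.inr <| Or.inr <| Or.inr ⟨rfl, h₁⟩
  · exfalso
    have := congrArg List.length heq
    simp only [List.length_append, List.length_cons, List.length_nil] at this
    omega

lemma splitQuad {p q s t y : ℕ} {A B : List ℕ} (h : [p, q, s, t] <+ A ++ y :: B) :
    [p, q, s, t] <+ A ++ B ∨ (p = y ∧ [q, s, t] <+ B) ∨ (q = y ∧ p ∈ A ∧ [s, t] <+ B)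
      ∨ (s = y ∧ [p, q] <+ A ∧ t ∈ B) ∨ (t = y ∧ [p, q, s] <+ A) := by
  rcases splitY h with h' | ⟨l₁, l₂, heq, h₁, h₂⟩
  · exact Or.inl h'
  rcases l₁ with _ | ⟨a1, l₁⟩
  · simp only [List.nil_append, List.cons.injEq] at heq
    obtain ⟨rfl, rfl⟩ := heq
    exact Or.inr <| Or.inl ⟨rfl, h₂⟩
  rcases l₁ with _ | ⟨a2, l₁⟩
  · simp only [List.cons_append, List.nil_append, List.cons.injEq] at heq
    obtain ⟨rfl, rfl, rfl⟩ := heq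
    exact Or.inr <| Or.inr <| Or.inl ⟨rfl, by simpa using h₁, h₂⟩
  rcases l₁ with _ | ⟨a3, l₁⟩
  · simp only [List.cons_append, List.nil_append, List.cons.injEq] at heq
    obtain ⟨rfl, rfl, rfl, rfl⟩ := heq
    refine Or.inr <| Or.inr <| Or.inr <| Or.inl ⟨rfl, ?_, by simpa using h₂⟩
    simpa using h₁
  rcases l₁ with _ | ⟨a4, l₁⟩
  · simp only [List.cons_append, List.nil_append, List.cons.injEq] at heq
    obtain ⟨rfl, rfl, rfl, rfl, rfl⟩ := heq
    exact Or.inr <| Or.inr <| Or.inr <| Or.inr ⟨rfl, h₁⟩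
  · exfalso
    have := congrArg List.length heq
    simp only [List.length_append, List.length_cons, List.length_nil] at this
    omega

lemma splitPair0 {p q : ℕ} {A B : List ℕ} (h : [p, q] <+ A ++ B) :
    [p, q] <+ A ∨ (p ∈ A ∧ q ∈ B) ∨ [p, q] <+ B := by
  rcases List.sublist_append_iff.1 h with ⟨l₁, l₂, heq, h₁, h₂⟩
  rcases l₁ with _ | ⟨a1, l₁⟩
  · simp only [List.nil_append] at heq; subst heq; exact Or.inr (Or.inr h₂)
  rcases l₁ with _ | ⟨a2, l₁⟩
  · simp only [List.cons_append, List.nil_append, List.cons.injEq] at heq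
    obtain ⟨rfl, rfl⟩ := heq
    exact Or.inr <| Or.inl ⟨by simpa using (h₁.subset (by simp)), by simpa using h₂⟩
  rcases l₁ with _ | ⟨a3, l₁⟩
  · simp only [List.cons_append, List.nil_append, List.cons.injEq] at heq
    obtain ⟨rfl, rfl, rfl⟩ := heq
    exact Or.inl h₁
  · exfalso
    have := congrArg List.length heq
    simp only [List.length_append, List.length_cons, List.length_nil] at this
    omega

lemma splitTriple0 {p q s : ℕ} {A B : List ℕ} (h : [p, q, s] <+ A ++ B) :
    [p, q, s] <+ A ∨ ([p, q] <+ A ∧ s ∈ B) ∨ (p ∈ A ∧ [q, s] <+ B) ∨ [p, q, s] <+ B := by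
  rcases List.sublist_append_iff.1 h with ⟨l₁, l₂, heq, h₁, h₂⟩
  rcases l₁ with _ | ⟨a1, l₁⟩
  · simp only [List.nil_append] at heq; subst heq; exact Or.inr (Or.inr (Or.inr h₂))
  rcases l₁ with _ | ⟨a2, l₁⟩
  · simp only [List.cons_append, List.nil_append, List.cons.injEq] at heq
    obtain ⟨rfl, rfl⟩ := heq
    exact Or.inr <| Or.inr <| Or.inl ⟨by simpa using (h₁.subset (by simp)), h₂⟩
  rcases l₁ with _ | ⟨a3, l₁⟩
  · simp only [List.cons_append, List.nil_append, List.cons.injEq] at heq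
    obtain ⟨rfl, rfl, rfl⟩ := heq
    exact Or.inr <| Or.inl ⟨h₁, by simpa using h₂⟩
  rcases l₁ with _ | ⟨a4, l₁⟩
  · simp only [List.cons_append, List.nil_append, List.cons.injEq] at heq
    obtain ⟨rfl, rfl, rfl, rfl⟩ := heq
    exact Or.inl h₁
  · exfalso
    have := congrArg List.length heq
    simp only [List.length_append, List.length_cons, List.length_nil] at this
    omega

/- ### structure of the pop condition -/

lemma popSplit {A : List ℕ} {y x : ℕ} (hnd : (A ++ [y]).Nodup) (hdd : ¬HasDD (A ++ [y]))
    (hpop : PopC x (A ++ [y])) :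
    ∃ g d, x < d ∧ d < g ∧ d ≤ y ∧ [g, d] <+ A ++ [y] ∧
      ((d = y ∧ ∃ P, A = P ++ [g]) ∨ (d < y ∧ ∃ P Q₀, A = P ++ g :: d :: Q₀)) := by
  obtain ⟨g, d, l₁, l₂, heq, hdg, hxd⟩ := hpop
  rcases l₂.eq_nil_or_concat' with rfl | ⟨L, e, rfl⟩
  · -- d is the last element: d = y
    have h1 : (l₁ ++ [g]) ++ [d] = A ++ [y] := by rw [heq]; simp
    obtain ⟨hA, hy⟩ := List.append_inj' h1 rfl
    have hy' : d = y := by simpa using hy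
    refine ⟨g, d, hxd, hdg, le_of_eq hy', ?_, Or.inl ⟨hy', l₁, hA.symm⟩⟩
    rw [heq]; exact sub_right (by simp)
  · -- d is inside A
    have h1 : (l₁ ++ g :: d :: L) ++ [e] = A ++ [y] := by rw [heq]; simp
    obtain ⟨hA, hy⟩ := List.append_inj' h1 rfl
    have hy' : y = e := by simpa using hy.symm
    subst hy'
    have hdy : d ≠ y := by
      refine ne_of_memAB (A := A) (B := [y]) hnd ?_ (by simp)
      rw [← hA]; simp
    have hylt : ¬ y < d := by
      intro hlt
      exact hdd ⟨g, d, y, l₁, L, [], by rw [heq]; simp, hdg, hlt⟩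
    refine ⟨g, d, hxd, hdg, by omega, ?_, Or.inr ⟨by omega, l₁, L, hA.symm⟩⟩
    rw [heq]
    apply sub_right
    exact List.Sublist.cons₂ _ (List.Sublist.cons₂ _ (List.nil_sublist _))

end SccAux
namespace SccAux
open List

section PopLemmas

variable {A : List ℕ} {y x : ℕ} {r : List ℕ}

lemma w_group : A ++ y :: x :: r = (A ++ [y]) ++ x :: r := by simp

lemma u0_sub_w : A ++ [y] <+ A ++ y :: x :: r :=
  (List.Sublist.cons₂ y (List.nil_sublist _)).append_left A

lemma w'_sub_w : A ++ x :: r <+ A ++ y :: x :: r :=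
  (List.sublist_cons_self y (x :: r)).append_left A

lemma CL4 {v : ℕ} (hnd : (A ++ y :: x :: r).Nodup) (hdd : ¬HasDD (A ++ [y]))
    (hpop : PopC x (A ++ [y])) (hv : v ∉ A ++ y :: x :: r) :
    Fallible v (A ++ y :: x :: r) ↔
      Fallible v (A ++ x :: r) ∨ (v < y ∧ ∃ z ∈ A ++ x :: r, z < v) := by
  have hnd₀ : (A ++ [y]).Nodup := hnd.sublist u0_sub_w
  obtain ⟨g, d, hxd, hdg, hdy, hgd, hcase⟩ := popSplit hnd₀ hdd hpop
  have hxy : x < y := lt_of_lt_of_le hxd hdy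
  constructor
  · rintro (⟨a, b, hav, hvb, hs⟩ | ⟨a, b, c, hav, hvb, hbc, hs⟩)
    · rcases splitPair hs with h' | ⟨rfl, hb⟩ | ⟨rfl, ha⟩
      · exact Or.inl (Or.inl ⟨a, b, hav, hvb, h'⟩)
      · -- a = y, b ∈ x :: r
        have hbr : b ∈ r := by
          rcases List.mem_cons.1 hb with rfl | h; · omega
          · exact h
        refine Or.inl (Or.inl ⟨x, b, by omega, hvb, ?_⟩)
        exact sub_right (List.Sublist.cons₂ x (sub1 hbr))
      · exact Or.inr ⟨hvb, a, List.mem_append_left _ ha, hav⟩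
    · rcases splitTriple hs with h' | ⟨rfl, hba⟩ | ⟨rfl, hc, hb⟩ | ⟨rfl, hcb⟩
      · exact Or.inl (Or.inr ⟨a, b, c, hav, hvb, hbc, h'⟩)
      · -- c = y : [b, a] <+ x :: r
        have haB : a ∈ x :: r := hba.subset (by simp)
        exact Or.inr ⟨by omega, a, List.mem_append_right _ haB, hav⟩
      · -- b = y
        exact Or.inr ⟨hvb, a, List.mem_append_right _ hb, hav⟩
      · -- a = y : [c, b] <+ A
        refine Or.inl (Or.inr ⟨x, b, c, by omega, hvb, hbc, ?_⟩)
        exact hcb.append (sub1 (by simp))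
  · rintro (hF | ⟨hvy, z, hz, hzv⟩)
    · exact Fallible_mono w'_sub_w hF
    · rcases List.mem_append.1 hz with hzA | hzB
      · exact Or.inl ⟨z, y, hzv, hvy, sub2 hzA (by simp)⟩
      · by_cases hdv : v < d
        · refine Or.inr ⟨z, d, g, hzv, hdv, hdg, ?_⟩
          rw [w_group]
          exact hgd.append (sub1 hzB)
        · have hdne : d ≠ v := by
            intro h; subst h
            exact hv ((u0_sub_w).subset (hgd.subset (by simp)))
          have hdv' : d < v := by omega
          rcases hcase with ⟨hde, _⟩ | ⟨hdlt, P, Q₀, hA⟩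
          · omega
          · refine Or.inl ⟨d, y, hdv', hvy, sub2 ?_ (by simp : y ∈ y :: x :: r)⟩
            rw [hA]; simp

end PopLemmas
end SccAux
namespace SccAux
open List

section PopM

variable {A : List ℕ} {y x : ℕ} {r : List ℕ}

lemma CL5 (hnd : (A ++ y :: x :: r).Nodup) (hdd : ¬HasDD (A ++ [y]))
    (hpop : PopC x (A ++ [y])) :
    Bad (A ++ y :: x :: r) ↔ Bad (A ++ x :: r) ∨ Fallible y (A ++ x :: r) := by
  have hnd₀ : (A ++ [y]).Nodup := hnd.sublist u0_sub_w
  have hnd' : ((A ++ [y]) ++ x :: r).Nodup := by rw [← w_group]; exact hnd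
  obtain ⟨g, d, hxd, hdg, hdy, hgd, hcase⟩ := popSplit hnd₀ hdd hpop
  have hxy : x < y := lt_of_lt_of_le hxd hdy
  -- any element of the input part bigger than y yields HasM in the full word
  have auxM : ∀ b, b ∈ x :: r → y < b → HasM (A ++ y :: x :: r) := by
    intro b hb hyb
    have hbr : b ∈ r := by
      rcases List.mem_cons.1 hb with rfl | h; · omega
      · exact h
    refine ⟨x, d, g, b, hxd, hdg, by omega, ?_⟩
    rw [w_group]
    exact hgd.append (List.Sublist.cons₂ x (sub1 hbr))
  constructor
  · rintro (⟨a, b, c, hab, hbc, hs⟩ | ⟨a, b, c, e, hab, hbc, hbe, hs⟩)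
    · -- 132 occurrence [a, c, b] in the full word
      rcases splitTriple hs with h' | ⟨rfl, hcb⟩ | ⟨rfl, haA, hbB⟩ | ⟨rfl, hac⟩
      · exact Or.inl (Or.inl ⟨a, b, c, hab, hbc, h'⟩)
      · -- a = y ; [c, b] <+ x :: r
        have hcB : c ∈ x :: r := hcb.subset (by simp)
        have hcr : c ∈ r := by
          rcases List.mem_cons.1 hcB with rfl | h; · omega
          · exact h
        exact Or.inr (Or.inl ⟨x, c, hxy, by omega, sub_right (List.Sublist.cons₂ x (sub1 hcr))⟩)
      · -- c = y ; a ∈ A, b ∈ x :: r, a < b < y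
        rcases hcase with ⟨hde, P, hA⟩ | ⟨hdlt, P, Q₀, hA⟩
        · -- A = P ++ [g], g > y
          have hgy : c < g := by omega
          have haP : a ∈ P := by
            rw [hA] at haA
            rcases List.mem_append.1 haA with h | h
            · exact h
            · simp at h; omega
          refine Or.inl (Or.inl ⟨a, b, g, hab, by omega, ?_⟩)
          rw [hA, show P ++ [g] ++ x :: r = P ++ [g] ++ (x :: r) from rfl]
          exact sub3 haP (by simp) hbB
        · -- A = P ++ g :: d :: Q₀, d < y
          by_cases hbd : b < d
          · rw [hA] at haA
            simp only [List.mem_append, List.mem_cons] at haA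
            rcases haA with h | rfl | rfl | h
            · refine Or.inl (Or.inl ⟨a, b, d, hab, hbd, ?_⟩)
              rw [hA]
              exact sub3 h (by simp) hbB
            · omega
            · omega
            · exfalso
              obtain ⟨α, β, hQ⟩ := List.append_of_mem h
              exact hdd ⟨g, d, a, P, α, β ++ [c], by rw [hA, hQ]; simp, hdg, by omega⟩
          · have hbd' : d ≠ b := ne_of_memAB hnd' (by rw [hA]; simp) hbB
            have hdb : d < b := by omega
            have hbr : b ∈ r := by
              rcases List.mem_cons.1 hbB with rfl | h; · omega
              · exact h
            refine Or.inl (Or.inr ⟨x, d, g, b, hxd, hdg, hdb, ?_⟩)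
            have hgdA : [g, d] <+ A := by
              rw [hA]
              exact sub_right (List.Sublist.cons₂ _ (List.Sublist.cons₂ _ (List.nil_sublist _)))
            exact hgdA.append (List.Sublist.cons₂ x (sub1 hbr))
      · -- b = y ; [a, c] <+ A
        exact Or.inr (Or.inl ⟨a, c, hab, hbc, hac.trans (List.sublist_append_left _ _)⟩)
    · -- M occurrence [c, b, a, e] in the full word
      rcases splitQuad hs with h' | ⟨rfl, hbae⟩ | ⟨rfl, hcA, hae⟩ | ⟨rfl, hcb, heB⟩ | ⟨rfl, hcba⟩
      · exact Or.inl (Or.inr ⟨a, b, c, e, hab, hbc, hbe, h'⟩)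
      · -- c = y ; [b, a, e] <+ x :: r
        by_cases hey : c < e
        · have hbeB : [b, e] <+ x :: r := by
            refine (?_ : [b, e] <+ [b, a, e]).trans hbae
            exact List.Sublist.cons₂ b (List.sublist_cons_self a [e])
          exact Or.inr (Or.inl ⟨b, e, hbc, hey, sub_right hbeB⟩)
        · have heB : e ∈ x :: r := hbae.subset (by simp)
          have hye : c ≠ e := ne_of_memAB hnd' (by simp) heB
          have hey' : e < c := by omega
          rcases hcase with ⟨hde, P, hA⟩ | ⟨hdlt, P, Q₀, hA⟩
          · -- d = y, A = P ++ [g], g > y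
            refine Or.inl (Or.inr ⟨a, b, g, e, hab, by omega, hbe, ?_⟩)
            have hgA : g ∈ A := by rw [hA]; simp
            exact (sub1 hgA).append hbae
          · by_cases hbd : b < d
            · refine Or.inl (Or.inr ⟨a, b, d, e, hab, hbd, hbe, ?_⟩)
              have hdA : d ∈ A := by rw [hA]; simp
              exact (sub1 hdA).append hbae
            · have hbB : b ∈ x :: r := hbae.subset (by simp)
              have hbd' : d ≠ b := ne_of_memAB hnd' (by rw [hA]; simp) hbB
              have hdb : d < b := by omega
              have hbr : b ∈ r := by
                rcases List.mem_cons.1 hbB with rfl | h; · omega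
                · exact h
              refine Or.inl (Or.inr ⟨x, d, g, b, hxd, hdg, hdb, ?_⟩)
              have hgdA : [g, d] <+ A := by
                rw [hA]
                exact sub_right (List.Sublist.cons₂ _ (List.Sublist.cons₂ _ (List.nil_sublist _)))
              exact hgdA.append (List.Sublist.cons₂ x (sub1 hbr))
      · -- b = y ; c ∈ A, [a, e] <+ x :: r
        exact Or.inr (Or.inl ⟨a, e, hab, hbe, sub_right hae⟩)
      · -- a = y ; [c, b] <+ A, e ∈ x :: r, y < b
        have h321 : [c, b, a] <+ A ++ [a] := hcb.append (sub1 (by simp))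
        obtain ⟨m, hmy, hmsub⟩ := core hnd₀ hdd h321 hbc hab
        have hmA : m ∈ A := by
          have hm : m ∈ A ++ [a] := hmsub.subset (by simp)
          rcases List.mem_append.1 hm with h | h
          · exact h
          · simp at h; omega
        exact Or.inr (Or.inl ⟨m, e, hmy, by omega, sub2 hmA heB⟩)
      · -- e = y ; [c, b, a] <+ A, b < y
        have hsub' : [c, b, a] <+ A ++ [e] := hcba.trans (List.sublist_append_left _ _)
        obtain ⟨m, hma, hmsub⟩ := core hnd₀ hdd hsub' hbc hab
        have hnoY : [m, b, a] <+ A := by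
          have := sub_of_noY (A := A) (B := []) (y := e) (by simpa using hmsub) ?_
          · simpa using this
          · simp only [List.mem_cons, List.not_mem_nil]
            push_neg
            refine ⟨by omega, by omega, by omega, by simp⟩
        exact Or.inl (Or.inl ⟨m, a, b, hma, hab, hnoY.trans (List.sublist_append_left _ _)⟩)
  · rintro (hB | ⟨z, b, hzy, hyb, hs⟩ | ⟨a', b', c', hay, hyb', hbc', hs⟩)
    · exact Bad_mono w'_sub_w hB
    · -- F1 y : [z, b] <+ A ++ x :: r with z < y < b
      rcases splitPair0 hs with hA' | ⟨hzA, hbB⟩ | hB'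
      · exact Or.inl ⟨z, y, b, hzy, hyb, hA'.append (sub1 (by simp : y ∈ y :: x :: r))⟩
      · exact Or.inr (auxM b hbB hyb)
      · exact Or.inr (auxM b (hB'.subset (by simp)) hyb)
    · -- F2 y : [c', b', a'] <+ A ++ x :: r with a' < y < b' < c'
      rcases splitTriple0 hs with hA' | ⟨hA2, haB⟩ | ⟨hcA, hba⟩ | hB'
      · have h321 : [c', b', y] <+ A ++ [y] := (sub_init2 hA').append (sub1 (by simp))
        obtain ⟨m, hmy, hmsub⟩ := core hnd₀ hdd h321 hbc' hyb'
        exact Or.inl ⟨m, y, b', hmy, hyb', hmsub.trans u0_sub_w⟩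
      · have h321 : [c', b', y] <+ A ++ [y] := hA2.append (sub1 (by simp))
        obtain ⟨m, hmy, hmsub⟩ := core hnd₀ hdd h321 hbc' hyb'
        exact Or.inl ⟨m, y, b', hmy, hyb', hmsub.trans u0_sub_w⟩
      · exact Or.inr (auxM b' (hba.subset (by simp)) hyb')
      · exact Or.inr (auxM b' (hB'.subset (by simp)) hyb')

end PopM
end SccAux
namespace SccAux
open List

lemma rev_pair {a b : ℕ} {S : List ℕ} : [a, b] <+ S.reverse ↔ [b, a] <+ S := by
  rw [rev_sub]; simp

lemma rev_triple {a b c : ℕ} {S : List ℕ} : [a, b, c] <+ S.reverse ↔ [c, b, a] <+ S := by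
  rw [rev_sub]; simp

lemma REV1 {L : List ℕ} : VincD L ↔ HasDD L.reverse := by
  constructor
  · rintro ⟨e, f, g, l₁, l₂, l₃, rfl, hef, hfg⟩
    exact ⟨g, f, e, l₃.reverse, l₂.reverse, l₁.reverse, by simp, hfg, hef⟩
  · rintro ⟨c, d, e, l₁, l₂, l₃, heq, hdc, hed⟩
    refine ⟨e, d, c, l₃.reverse, l₂.reverse, l₁.reverse, ?_, hed, hdc⟩
    have := congrArg List.reverse heq
    simpa using this

lemma vincD_cons {y : ℕ} {S : List ℕ} (h : VincD S) : VincD (y :: S) := by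
  obtain ⟨e, f, g, l₁, l₂, l₃, rfl, hef, hfg⟩ := h
  exact ⟨e, f, g, y :: l₁, l₂, l₃, rfl, hef, hfg⟩

lemma not_vincD_nil : ¬ VincD ([] : List ℕ) := by
  rintro ⟨e, f, g, l₁, l₂, l₃, heq, -, -⟩
  have := congrArg List.length heq
  simp only [List.length_nil, List.length_append, List.length_cons] at this
  omega

lemma not_vincD_singleton (x : ℕ) : ¬ VincD [x] := by
  rintro ⟨e, f, g, l₁, l₂, l₃, heq, -, -⟩
  have := congrArg List.length heq
  simp only [List.length_cons, List.length_nil, List.length_append] at this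
  omega

lemma popiff {y x : ℕ} {S' : List ℕ} (hinv : ¬ VincD (y :: S')) :
    VincD (x :: y :: S') ↔ PopC x (S'.reverse ++ [y]) := by
  constructor
  · rintro ⟨e, f, g, l₁, l₂, l₃, heq, hef, hfg⟩
    rcases l₁ with _ | ⟨a, l₁⟩
    · rw [List.nil_append] at heq
      injection heq with hex htail
      subst hex
      refine ⟨g, f, l₃.reverse, l₂.reverse, ?_, hfg, hef⟩
      have : (y :: S').reverse = (l₂ ++ f :: g :: l₃).reverse := by rw [htail]; rfl
      simp only [List.reverse_cons] at this
      rw [this]; simp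
    · rw [List.cons_append] at heq
      injection heq with hex htail
      exact absurd ⟨e, f, g, l₁, l₂, l₃, htail, hef, hfg⟩ hinv
  · rintro ⟨c, d, l₁, l₂, heq, hdc, hxd⟩
    have h2 : y :: S' = l₂.reverse ++ d :: c :: l₁.reverse := by
      have := congrArg List.reverse heq
      simpa using this
    exact ⟨x, d, c, [], l₂.reverse, l₁.reverse, by rw [h2]; simp, hxd, hdc⟩

/-- base case for M1 -/
lemma baseM1 {S : List ℕ} {v : ℕ} (hnd : S.Nodup) (hinv : ¬ VincD S) :
    HasFall v S ↔ Fallible v S.reverse := by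
  have hdd : ¬ HasDD S.reverse := fun h => hinv (REV1.2 (by simpa using h))
  have h1 : F1 v S.reverse ↔ HasFall v S := by
    constructor
    · rintro ⟨a, b, hav, hvb, hs⟩
      exact ⟨b, a, hav, hvb, rev_pair.1 hs⟩
    · rintro ⟨a, b, hbv, hva, hs⟩
      exact ⟨b, a, hbv, hva, rev_pair.2 hs⟩
  constructor
  · intro h; exact Or.inl (h1.2 h)
  · rintro (h | h)
    · exact h1.1 h
    · exact h1.1 (M1base (by simpa using hnd) hdd h)

/-- base case for M2 -/
lemma baseM2 {S : List ℕ} (hnd : S.Nodup) (hinv : ¬ VincD S) :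
    Has231 S ↔ Bad S.reverse := by
  have hdd : ¬ HasDD S.reverse := fun h => hinv (REV1.2 (by simpa using h))
  have h1 : Has132 S.reverse ↔ Has231 S := by
    constructor
    · rintro ⟨a, b, c, hab, hbc, hs⟩
      exact ⟨a, b, c, hab, hbc, rev_triple.1 hs⟩
    · rintro ⟨a, b, c, hab, hbc, hs⟩
      exact ⟨a, b, c, hab, hbc, rev_triple.2 hs⟩
  constructor
  · intro h; exact Or.inl (h1.2 h)
  · rintro (h | h)
    · exact h1.1 h
    · exact h1.1 (M2base (by simpa using hnd) hdd h)

lemma hasFall_cons {v y : ℕ} {Z : List ℕ} :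
    HasFall v (y :: Z) ↔ (v < y ∧ ∃ z ∈ Z, z < v) ∨ HasFall v Z := by
  constructor
  · rintro ⟨a, b, hbv, hva, hs⟩
    rcases List.sublist_cons_iff.1 hs with h | ⟨l', heq, hl'⟩
    · exact Or.inr ⟨a, b, hbv, hva, h⟩
    · simp only [List.cons.injEq] at heq
      obtain ⟨rfl, rfl⟩ := heq
      exact Or.inl ⟨hva, b, (List.singleton_sublist.1 hl'), hbv⟩
  · rintro (⟨hvy, z, hz, hzv⟩ | ⟨a, b, hbv, hva, hs⟩)
    · exact ⟨y, z, hzv, hvy, List.Sublist.cons₂ y (sub1 hz)⟩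
    · exact ⟨a, b, hbv, hva, hs.trans (List.sublist_cons_self _ _)⟩

lemma has231_cons {y : ℕ} {Z : List ℕ} :
    Has231 (y :: Z) ↔ Has231 Z ∨ HasFall y Z := by
  constructor
  · rintro ⟨a, b, c, hab, hbc, hs⟩
    rcases List.sublist_cons_iff.1 hs with h | ⟨l', heq, hl'⟩
    · exact Or.inl ⟨a, b, c, hab, hbc, h⟩
    · simp only [List.cons.injEq] at heq
      obtain ⟨rfl, rfl⟩ := heq
      exact Or.inr ⟨c, a, hab, hbc, hl'⟩
  · rintro (⟨a, b, c, hab, hbc, hs⟩ | ⟨p, q, hqy, hyp, hs⟩)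
    · exact ⟨a, b, c, hab, hbc, hs.trans (List.sublist_cons_self _ _)⟩
    · exact ⟨q, y, p, hqy, hyp, List.Sublist.cons₂ y hs⟩

lemma permYS (y : ℕ) (S' B : List ℕ) : ((y :: S') ++ B).Perm (S'.reverse ++ y :: B) := by
  have h1 : ((y :: S') ++ B) = y :: (S' ++ B) := rfl
  rw [h1]
  calc y :: (S' ++ B) ~ y :: (S'.reverse ++ B) :=
        List.Perm.cons y ((S'.reverse_perm).symm.append_right B)
    _ ~ S'.reverse ++ y :: B := List.perm_middle.symm

end SccAux
namespace SccAux
open List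

lemma get_split (l₁ : List ℕ) (e : ℕ) (R : List ℕ) (h : l₁.length < (l₁ ++ e :: R).length) :
    (l₁ ++ e :: R).get ⟨l₁.length, h⟩ = e := by
  rw [List.get_eq_getElem, List.getElem_append_right (le_refl _)]
  simp

lemma get_split' (l₁ : List ℕ) (e : ℕ) (R : List ℕ) {k : ℕ} (hk : k = l₁.length)
    (h : k < (l₁ ++ e :: R).length) : (l₁ ++ e :: R).get ⟨k, h⟩ = e := by
  subst hk; exact get_split l₁ e R h

lemma decomp2adj (L : List ℕ) (i j : ℕ) (hij : i < j) (hj : j + 1 < L.length) :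
    ∃ l₁ l₂ l₃, L = l₁ ++ (L.get ⟨i, by omega⟩) :: l₂ ++
      (L.get ⟨j, by omega⟩) :: (L.get ⟨j + 1, hj⟩) :: l₃ := by
  refine ⟨L.take i, (L.drop (i + 1)).take (j - i - 1), L.drop (j + 2), ?_⟩
  have h1 : L = L.take i ++ L.drop i := (List.take_append_drop i L).symm
  have h2 : L.drop i = L.get ⟨i, by omega⟩ :: L.drop (i + 1) := by
    rw [List.drop_eq_getElem_cons (by omega)]; simp
  have h3 : L.drop (i + 1) =
      (L.drop (i + 1)).take (j - i - 1) ++ L.drop j := by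
    have hd : L.drop j = List.drop (j - i - 1) (L.drop (i + 1)) := by
      rw [List.drop_drop]
      congr 1
      omega
    rw [hd, List.take_append_drop]
  have h4 : L.drop j = L.get ⟨j, by omega⟩ :: L.get ⟨j + 1, hj⟩ :: L.drop (j + 2) := by
    rw [List.drop_eq_getElem_cons (by omega)]
    have : L.drop (j + 1) = L.get ⟨j + 1, hj⟩ :: L.drop (j + 2) := by
      rw [List.drop_eq_getElem_cons (by omega)]; simp
    rw [this]; simp
  conv_lhs => rw [h1, h2, h3, h4]
  simp

lemma bridge132 {L : List ℕ} : ContainsV [1, 3, 2] ∅ L ↔ Has132 L := by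
  constructor
  · rintro ⟨f, hmono, hiso, -⟩
    have hi0 : (0 : ℕ) < [1, 3, 2].length := by norm_num
    have hi1 : (1 : ℕ) < [1, 3, 2].length := by norm_num
    have hi2 : (2 : ℕ) < [1, 3, 2].length := by norm_num
    have h01 : f ⟨0, hi0⟩ < f ⟨1, hi1⟩ := hmono (Fin.mk_lt_mk.2 (by norm_num))
    have h12 : f ⟨1, hi1⟩ < f ⟨2, hi2⟩ := hmono (Fin.mk_lt_mk.2 (by norm_num))
    have hsub : [L.get (f ⟨0, hi0⟩), L.get (f ⟨1, hi1⟩), L.get (f ⟨2, hi2⟩)] <+ L := by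
      have := List.map_getElem_sublist (l := L)
        (is := [f ⟨0, hi0⟩, f ⟨1, hi1⟩, f ⟨2, hi2⟩]) ?_
      · simpa using this
      · simp only [List.pairwise_cons, List.mem_cons, List.mem_singleton]
        refine ⟨?_, ?_, by simp⟩
        · rintro b (rfl | rfl | h)
          · exact h01
          · exact h01.trans h12
          · simp at h
        · rintro b (rfl | h)
          · exact h12
          · simp at h
    have e01 : L.get (f ⟨0, hi0⟩) < L.get (f ⟨1, hi1⟩) := (hiso ⟨0, hi0⟩ ⟨1, hi1⟩).1 (by simp)
    have e21 : L.get (f ⟨2, hi2⟩) < L.get (f ⟨1, hi1⟩) := (hiso ⟨2, hi2⟩ ⟨1, hi1⟩).1 (by simp)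
    have e02 : L.get (f ⟨0, hi0⟩) < L.get (f ⟨2, hi2⟩) := (hiso ⟨0, hi0⟩ ⟨2, hi2⟩).1 (by simp)
    exact ⟨_, _, _, e02, e21, hsub⟩
  · rintro ⟨a, b, c, hab, hbc, hs⟩
    obtain ⟨e, he⟩ := List.sublist_iff_exists_fin_orderEmbedding_get_eq.1 hs
    refine ⟨e, e.strictMono, ?_, by simp⟩
    intro i j
    rw [← he i, ← he j]
    fin_cases i <;> fin_cases j <;> simp <;> omega

end SccAux
namespace SccAux
open List

lemma bridge231 {L : List ℕ} : ContainsV [2, 3, 1] ∅ L ↔ Has231 L := by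
  constructor
  · rintro ⟨f, hmono, hiso, -⟩
    have hi0 : (0 : ℕ) < [2, 3, 1].length := by norm_num
    have hi1 : (1 : ℕ) < [2, 3, 1].length := by norm_num
    have hi2 : (2 : ℕ) < [2, 3, 1].length := by norm_num
    have h01 : f ⟨0, hi0⟩ < f ⟨1, hi1⟩ := hmono (Fin.mk_lt_mk.2 (by norm_num))
    have h12 : f ⟨1, hi1⟩ < f ⟨2, hi2⟩ := hmono (Fin.mk_lt_mk.2 (by norm_num))
    have hsub : [L.get (f ⟨0, hi0⟩), L.get (f ⟨1, hi1⟩), L.get (f ⟨2, hi2⟩)] <+ L := by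
      have := List.map_getElem_sublist (l := L)
        (is := [f ⟨0, hi0⟩, f ⟨1, hi1⟩, f ⟨2, hi2⟩]) ?_
      · simpa using this
      · simp only [List.pairwise_cons, List.mem_cons, List.mem_singleton]
        refine ⟨?_, ?_, by simp⟩
        · rintro b (rfl | rfl | h)
          · exact h01
          · exact h01.trans h12
          · simp at h
        · rintro b (rfl | h)
          · exact h12
          · simp at h
    have e01 : L.get (f ⟨0, hi0⟩) < L.get (f ⟨1, hi1⟩) := (hiso ⟨0, hi0⟩ ⟨1, hi1⟩).1 (by simp)
    have e20 : L.get (f ⟨2, hi2⟩) < L.get (f ⟨0, hi0⟩) := (hiso ⟨2, hi2⟩ ⟨0, hi0⟩).1 (by simp)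
    exact ⟨_, _, _, e20, e01, hsub⟩
  · rintro ⟨a, b, c, hab, hbc, hs⟩
    obtain ⟨e, he⟩ := List.sublist_iff_exists_fin_orderEmbedding_get_eq.1 hs
    refine ⟨e, e.strictMono, ?_, by simp⟩
    intro i j
    rw [← he i, ← he j]
    fin_cases i <;> fin_cases j <;> simp <;> omega

lemma bridge3214 {L : List ℕ} : ContainsV [3, 2, 1, 4] ∅ L ↔ Has3214 L := by
  constructor
  · rintro ⟨f, hmono, hiso, -⟩
    have hi0 : (0 : ℕ) < [3, 2, 1, 4].length := by norm_num
    have hi1 : (1 : ℕ) < [3, 2, 1, 4].length := by norm_num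
    have hi2 : (2 : ℕ) < [3, 2, 1, 4].length := by norm_num
    have hi3 : (3 : ℕ) < [3, 2, 1, 4].length := by norm_num
    have h01 : f ⟨0, hi0⟩ < f ⟨1, hi1⟩ := hmono (Fin.mk_lt_mk.2 (by norm_num))
    have h12 : f ⟨1, hi1⟩ < f ⟨2, hi2⟩ := hmono (Fin.mk_lt_mk.2 (by norm_num))
    have h23 : f ⟨2, hi2⟩ < f ⟨3, hi3⟩ := hmono (Fin.mk_lt_mk.2 (by norm_num))
    have hsub : [L.get (f ⟨0, hi0⟩), L.get (f ⟨1, hi1⟩), L.get (f ⟨2, hi2⟩),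
        L.get (f ⟨3, hi3⟩)] <+ L := by
      have := List.map_getElem_sublist (l := L)
        (is := [f ⟨0, hi0⟩, f ⟨1, hi1⟩, f ⟨2, hi2⟩, f ⟨3, hi3⟩]) ?_
      · simpa using this
      · simp only [List.pairwise_cons, List.mem_cons, List.mem_singleton]
        refine ⟨?_, ?_, ?_, by simp⟩
        · rintro b (rfl | rfl | rfl | h)
          · exact h01
          · exact h01.trans h12
          · exact (h01.trans h12).trans h23
          · simp at h
        · rintro b (rfl | rfl | h)
          · exact h12
          · exact h12.trans h23
          · simp at h
        · rintro b (rfl | h)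
          · exact h23
          · simp at h
    have e21 : L.get (f ⟨2, hi2⟩) < L.get (f ⟨1, hi1⟩) :=
      (hiso ⟨2, hi2⟩ ⟨1, hi1⟩).1 (show (1:ℕ) < 2 by norm_num)
    have e10 : L.get (f ⟨1, hi1⟩) < L.get (f ⟨0, hi0⟩) :=
      (hiso ⟨1, hi1⟩ ⟨0, hi0⟩).1 (show (2:ℕ) < 3 by norm_num)
    have e03 : L.get (f ⟨0, hi0⟩) < L.get (f ⟨3, hi3⟩) :=
      (hiso ⟨0, hi0⟩ ⟨3, hi3⟩).1 (show (3:ℕ) < 4 by norm_num)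
    exact ⟨_, _, _, _, e21, e10, e03, hsub⟩
  · rintro ⟨a, b, c, d, hab, hbc, hcd, hs⟩
    obtain ⟨e, he⟩ := List.sublist_iff_exists_fin_orderEmbedding_get_eq.1 hs
    refine ⟨e, e.strictMono, ?_, by simp⟩
    intro i j
    rw [← he i, ← he j]
    fin_cases i <;> fin_cases j <;> simp [List.get] <;> omega

lemma bridge4213 {L : List ℕ} : ContainsV [4, 2, 1, 3] ∅ L ↔ Has4213 L := by
  constructor
  · rintro ⟨f, hmono, hiso, -⟩
    have hi0 : (0 : ℕ) < [4, 2, 1, 3].length := by norm_num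
    have hi1 : (1 : ℕ) < [4, 2, 1, 3].length := by norm_num
    have hi2 : (2 : ℕ) < [4, 2, 1, 3].length := by norm_num
    have hi3 : (3 : ℕ) < [4, 2, 1, 3].length := by norm_num
    have h01 : f ⟨0, hi0⟩ < f ⟨1, hi1⟩ := hmono (Fin.mk_lt_mk.2 (by norm_num))
    have h12 : f ⟨1, hi1⟩ < f ⟨2, hi2⟩ := hmono (Fin.mk_lt_mk.2 (by norm_num))
    have h23 : f ⟨2, hi2⟩ < f ⟨3, hi3⟩ := hmono (Fin.mk_lt_mk.2 (by norm_num))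
    have hsub : [L.get (f ⟨0, hi0⟩), L.get (f ⟨1, hi1⟩), L.get (f ⟨2, hi2⟩),
        L.get (f ⟨3, hi3⟩)] <+ L := by
      have := List.map_getElem_sublist (l := L)
        (is := [f ⟨0, hi0⟩, f ⟨1, hi1⟩, f ⟨2, hi2⟩, f ⟨3, hi3⟩]) ?_
      · simpa using this
      · simp only [List.pairwise_cons, List.mem_cons, List.mem_singleton]
        refine ⟨?_, ?_, ?_, by simp⟩
        · rintro b (rfl | rfl | rfl | h)
          · exact h01
          · exact h01.trans h12
          · exact (h01.trans h12).trans h23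
          · simp at h
        · rintro b (rfl | rfl | h)
          · exact h12
          · exact h12.trans h23
          · simp at h
        · rintro b (rfl | h)
          · exact h23
          · simp at h
    have e21 : L.get (f ⟨2, hi2⟩) < L.get (f ⟨1, hi1⟩) :=
      (hiso ⟨2, hi2⟩ ⟨1, hi1⟩).1 (show (1:ℕ) < 2 by norm_num)
    have e13 : L.get (f ⟨1, hi1⟩) < L.get (f ⟨3, hi3⟩) :=
      (hiso ⟨1, hi1⟩ ⟨3, hi3⟩).1 (show (2:ℕ) < 3 by norm_num)
    have e30 : L.get (f ⟨3, hi3⟩) < L.get (f ⟨0, hi0⟩) :=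
      (hiso ⟨3, hi3⟩ ⟨0, hi0⟩).1 (show (3:ℕ) < 4 by norm_num)
    exact ⟨_, _, _, _, e21, e13, e30, hsub⟩
  · rintro ⟨a, b, c, d, hab, hbc, hcd, hs⟩
    obtain ⟨e, he⟩ := List.sublist_iff_exists_fin_orderEmbedding_get_eq.1 hs
    refine ⟨e, e.strictMono, ?_, by simp⟩
    intro i j
    rw [← he i, ← he j]
    fin_cases i <;> fin_cases j <;> simp [List.get] <;> omega

lemma mSplit {u : List ℕ} (hnd : u.Nodup) : HasM u ↔ Has3214 u ∨ Has4213 u := by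
  constructor
  · rintro ⟨a, b, c, e, hab, hbc, hbe, hs⟩
    have hnd4 : ([c, b, a, e] : List ℕ).Nodup := hnd.sublist hs
    have hce : c ≠ e := by simp at hnd4; tauto
    have hae : a ≠ e := by simp at hnd4; tauto
    rcases lt_or_gt_of_ne hce with h | h
    · exact Or.inl ⟨a, b, c, e, hab, hbc, h, hs⟩
    · -- e < c
      have hbe' : b < e := hbe
      exact Or.inr ⟨a, b, e, c, hab, hbe', h, hs⟩
  · rintro (⟨a, b, c, d, hab, hbc, hcd, hs⟩ | ⟨a, b, c, d, hab, hbc, hcd, hs⟩)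
    · exact ⟨a, b, c, d, hab, hbc, by omega, hs⟩
    · exact ⟨a, b, d, c, hab, by omega, hbc, hs⟩

end SccAux
namespace SccAux
open List

lemma bridge_vinc {L : List ℕ} : ContainsV [1, 2, 3] {1} L ↔ VincD L := by
  constructor
  · rintro ⟨f, hmono, hiso, hadj⟩
    have hi0 : (0 : ℕ) < [1, 2, 3].length := by norm_num
    have hi1 : (1 : ℕ) < [1, 2, 3].length := by norm_num
    have hi2 : (2 : ℕ) < [1, 2, 3].length := by norm_num
    have hadjv : (f ⟨2, hi2⟩ : ℕ) = (f ⟨1, hi1⟩ : ℕ) + 1 := hadj 1 (by simp) (by norm_num)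
    have hij : (f ⟨0, hi0⟩ : ℕ) < (f ⟨1, hi1⟩ : ℕ) := hmono (Fin.mk_lt_mk.2 (by norm_num))
    have hj1 : (f ⟨1, hi1⟩ : ℕ) + 1 < L.length := by rw [← hadjv]; exact (f ⟨2, hi2⟩).isLt
    have v01 : L.get (f ⟨0, hi0⟩) < L.get (f ⟨1, hi1⟩) :=
      (hiso ⟨0, hi0⟩ ⟨1, hi1⟩).1 (show (1:ℕ) < 2 by norm_num)
    have v12 : L.get (f ⟨1, hi1⟩) < L.get (f ⟨2, hi2⟩) :=
      (hiso ⟨1, hi1⟩ ⟨2, hi2⟩).1 (show (2:ℕ) < 3 by norm_num)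
    obtain ⟨l₁, l₂, l₃, heq⟩ := decomp2adj L (f ⟨0, hi0⟩ : ℕ) (f ⟨1, hi1⟩ : ℕ) hij hj1
    refine ⟨_, _, _, l₁, l₂, l₃, heq, ?_, ?_⟩
    · exact v01
    · have e3 : L.get ⟨(f ⟨1, hi1⟩ : ℕ) + 1, hj1⟩ = L.get (f ⟨2, hi2⟩) :=
        congrArg L.get (Fin.ext hadjv.symm)
      rw [e3]
      exact v12
  · rintro ⟨e, f', g, l₁, l₂, l₃, rfl, hef, hfg⟩
    have hiL : l₁.length < (l₁ ++ e :: l₂ ++ f' :: g :: l₃).length := by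
      simp only [List.length_append, List.length_cons]; omega
    have hjL : (l₁ ++ e :: l₂).length < (l₁ ++ e :: l₂ ++ f' :: g :: l₃).length := by
      simp only [List.length_append, List.length_cons]; omega
    have hj1L : (l₁ ++ e :: l₂).length + 1 < (l₁ ++ e :: l₂ ++ f' :: g :: l₃).length := by
      simp only [List.length_append, List.length_cons]; omega
    have hij : l₁.length < (l₁ ++ e :: l₂).length := by
      simp only [List.length_append, List.length_cons]; omega
    have hg0 : (l₁ ++ e :: l₂ ++ f' :: g :: l₃)[l₁.length]'hiL = e := by
      rw [List.getElem_append_left (by simp only [List.length_append, List.length_cons]; omega)]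
      rw [List.getElem_append_right (le_refl _)]
      simp
    have hg1 : (l₁ ++ e :: l₂ ++ f' :: g :: l₃)[(l₁ ++ e :: l₂).length]'hjL = f' := by
      rw [List.getElem_append_right (le_refl _)]
      simp
    have hg2 : (l₁ ++ e :: l₂ ++ f' :: g :: l₃)[(l₁ ++ e :: l₂).length + 1]'hj1L = g := by
      rw [List.getElem_append_right (by omega)]
      simp
    refine ⟨fun k => if (k : ℕ) = 0 then ⟨l₁.length, hiL⟩
      else if (k : ℕ) = 1 then ⟨(l₁ ++ e :: l₂).length, hjL⟩
      else ⟨(l₁ ++ e :: l₂).length + 1, hj1L⟩, ?_, ?_, ?_⟩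
    · intro a b hab
      fin_cases a <;> fin_cases b <;> simp_all <;> omega
    · have hb0 : l₁.length < (l₁ ++ e :: (l₂ ++ f' :: g :: l₃)).length := by
        simp only [List.length_append, List.length_cons]; omega
      have hb1 : l₁.length + (l₂.length + 1) < (l₁ ++ e :: (l₂ ++ f' :: g :: l₃)).length := by
        simp only [List.length_append, List.length_cons]; omega
      have hb2 : l₁.length + (l₂.length + 1) + 1 < (l₁ ++ e :: (l₂ ++ f' :: g :: l₃)).length := by
        simp only [List.length_append, List.length_cons]; omega
      have hg0' : (l₁ ++ e :: (l₂ ++ f' :: g :: l₃))[l₁.length]'hb0 = e := by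
        rw [List.getElem_append_right (le_refl _)]; simp
      have hg1' : (l₁ ++ e :: (l₂ ++ f' :: g :: l₃))[l₁.length + (l₂.length + 1)]'hb1 = f' := by
        rw [List.getElem_append_right (by omega)]
        simp only [show l₁.length + (l₂.length + 1) - l₁.length = l₂.length + 1 from by omega,
          List.getElem_cons_succ]
        rw [List.getElem_append_right (le_refl _)]; simp
      have hg2' : (l₁ ++ e :: (l₂ ++ f' :: g :: l₃))[l₁.length + (l₂.length + 1) + 1]'hb2 = g := by
        rw [List.getElem_append_right (by omega)]
        simp only [show l₁.length + (l₂.length + 1) + 1 - l₁.length = l₂.length + 1 + 1 from by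
          omega, List.getElem_cons_succ]
        rw [List.getElem_append_right (by omega)]
        simp only [show l₂.length + 1 - l₂.length = 1 from by omega]
        simp
      intro a b
      fin_cases a <;> fin_cases b <;>
        simp [List.get_eq_getElem, hg0', hg1', hg2'] <;> omega
    · intro a ha h
      have ha1 : a = 1 := by simpa using ha
      subst ha1
      simp
  
end SccAux
namespace SccAux
open List

lemma scPerm : ∀ (N : ℕ) (S I : List ℕ), S.length + 2 * I.length ≤ N →
    (scAux [1, 2, 3] {1} S I).Perm (S ++ I) := by
  intro N
  induction N with
  | zero =>
    intro S I hle
    rcases I with _ | ⟨x, rest⟩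
    · rw [scAux]; simp
    · exfalso; simp only [List.length_cons] at hle; omega
  | succ N ih =>
    intro S I hle
    rcases I with _ | ⟨x, rest⟩
    · rw [scAux]; simp
    rcases S with _ | ⟨y, S'⟩
    · rw [scAux]
      have := ih [x] rest (by simp only [List.length_cons, List.length_nil] at hle ⊢; omega)
      simpa using this
    by_cases hc : ContainsV [1, 2, 3] {1} (x :: y :: S')
    · rw [scAux, if_pos hc]
      have := ih S' (x :: rest) (by simp only [List.length_cons] at hle ⊢; omega)
      exact this.cons y
    · rw [scAux, if_neg hc]
      have h1 := ih (x :: y :: S') rest (by simp only [List.length_cons] at hle ⊢; omega)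
      refine h1.trans ?_
      have h2 : (x :: y :: S') ++ rest = x :: ((y :: S') ++ rest) := rfl
      rw [h2]
      exact List.perm_middle.symm

lemma M1 : ∀ (N : ℕ) (S I : List ℕ) (v : ℕ), S.length + 2 * I.length ≤ N →
    (S ++ I).Nodup → ¬ VincD S → v ∉ S ++ I →
    (HasFall v (scAux [1, 2, 3] {1} S I) ↔ Fallible v (S.reverse ++ I)) := by
  intro N
  induction N with
  | zero =>
    intro S I v hle hnd hinv hv
    rcases I with _ | ⟨x, rest⟩
    · rw [scAux]; simpa using baseM1 (by simpa using hnd) hinv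
    · exfalso; simp only [List.length_cons] at hle; omega
  | succ N ih =>
    intro S I v hle hnd hinv hv
    rcases I with _ | ⟨x, rest⟩
    · rw [scAux]; simpa using baseM1 (by simpa using hnd) hinv
    rcases S with _ | ⟨y, S'⟩
    · rw [scAux]
      have := ih [x] rest v (by simp only [List.length_cons, List.length_nil] at hle ⊢; omega)
        (by simpa using hnd) (not_vincD_singleton x) (by simpa using hv)
      simpa using this
    have hndc : (y :: (S' ++ x :: rest)).Nodup := hnd
    have hnd1 : (S' ++ x :: rest).Nodup := (List.nodup_cons.1 hndc).2
    have hvc : v ∉ y :: (S' ++ x :: rest) := hv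
    have hv1 : v ∉ S' ++ x :: rest := fun h => hvc (List.mem_cons_of_mem y h)
    have hinv' : ¬ VincD S' := fun h => hinv (vincD_cons h)
    by_cases hc : ContainsV [1, 2, 3] {1} (x :: y :: S')
    · rw [scAux, if_pos hc]
      have hpopw : PopC x (S'.reverse ++ [y]) := (popiff hinv).1 (bridge_vinc.1 hc)
      have hndperm : ((y :: S') ++ (x :: rest)).Perm (S'.reverse ++ y :: x :: rest) :=
        permYS y S' (x :: rest)
      have hnd4 : (S'.reverse ++ y :: x :: rest).Nodup := hndperm.nodup_iff.1 hnd
      have hdd4 : ¬ HasDD (S'.reverse ++ [y]) := by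
        intro h
        apply hinv
        apply REV1.2
        rw [List.reverse_cons]
        exact h
      have hv4 : v ∉ S'.reverse ++ y :: x :: rest := fun h => hv (hndperm.mem_iff.2 h)
      have hIH := ih S' (x :: rest) v (by simp only [List.length_cons] at hle ⊢; omega)
        hnd1 hinv' hv1
      have hZperm := scPerm (S'.length + 2 * (x :: rest).length) S' (x :: rest) (le_refl _)
      have hmem : (∃ z ∈ scAux [1, 2, 3] {1} S' (x :: rest), z < v) ↔
          (∃ z ∈ S'.reverse ++ x :: rest, z < v) := by
        constructor
        · rintro ⟨z, hz, hzv⟩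
          refine ⟨z, ?_, hzv⟩
          have := hZperm.mem_iff.1 hz
          simp only [List.mem_append, List.mem_reverse] at this ⊢
          exact this
        · rintro ⟨z, hz, hzv⟩
          refine ⟨z, ?_, hzv⟩
          apply hZperm.mem_iff.2
          simp only [List.mem_append, List.mem_reverse] at hz ⊢
          exact hz
      rw [show (y :: S').reverse ++ x :: rest = S'.reverse ++ y :: x :: rest by simp]
      rw [hasFall_cons, hIH, hmem, CL4 hnd4 hdd4 hpopw hv4]
      exact or_comm
    · rw [scAux, if_neg hc]
      have hvd : ¬ VincD (x :: y :: S') := fun h => hc (bridge_vinc.2 h)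
      have hperm : ((y :: S') ++ (x :: rest)).Perm ((x :: y :: S') ++ rest) := by
        have h2 : (x :: y :: S') ++ rest = x :: ((y :: S') ++ rest) := rfl
        rw [h2]; exact List.perm_middle
      have := ih (x :: y :: S') rest v (by simp only [List.length_cons] at hle ⊢; omega)
        (hperm.nodup_iff.1 hnd) hvd (fun h => hv (hperm.mem_iff.2 h))
      rw [show (x :: y :: S').reverse ++ rest = (y :: S').reverse ++ x :: rest by simp] at this
      exact this

lemma M2 : ∀ (N : ℕ) (S I : List ℕ), S.length + 2 * I.length ≤ N →
    (S ++ I).Nodup → ¬ VincD S →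
    (Has231 (scAux [1, 2, 3] {1} S I) ↔ Bad (S.reverse ++ I)) := by
  intro N
  induction N with
  | zero =>
    intro S I hle hnd hinv
    rcases I with _ | ⟨x, rest⟩
    · rw [scAux]; simpa using baseM2 (by simpa using hnd) hinv
    · exfalso; simp only [List.length_cons] at hle; omega
  | succ N ih =>
    intro S I hle hnd hinv
    rcases I with _ | ⟨x, rest⟩
    · rw [scAux]; simpa using baseM2 (by simpa using hnd) hinv
    rcases S with _ | ⟨y, S'⟩
    · rw [scAux]
      have := ih [x] rest (by simp only [List.length_cons, List.length_nil] at hle ⊢; omega)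
        (by simpa using hnd) (not_vincD_singleton x)
      simpa using this
    have hndc : (y :: (S' ++ x :: rest)).Nodup := hnd
    have hnd1 : (S' ++ x :: rest).Nodup := (List.nodup_cons.1 hndc).2
    have hy1 : y ∉ S' ++ x :: rest := (List.nodup_cons.1 hndc).1
    have hinv' : ¬ VincD S' := fun h => hinv (vincD_cons h)
    by_cases hc : ContainsV [1, 2, 3] {1} (x :: y :: S')
    · rw [scAux, if_pos hc]
      have hpopw : PopC x (S'.reverse ++ [y]) := (popiff hinv).1 (bridge_vinc.1 hc)
      have hndperm : ((y :: S') ++ (x :: rest)).Perm (S'.reverse ++ y :: x :: rest) :=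
        permYS y S' (x :: rest)
      have hnd4 : (S'.reverse ++ y :: x :: rest).Nodup := hndperm.nodup_iff.1 hnd
      have hdd4 : ¬ HasDD (S'.reverse ++ [y]) := by
        intro h
        apply hinv
        apply REV1.2
        rw [List.reverse_cons]
        exact h
      have hIH := ih S' (x :: rest) (by simp only [List.length_cons] at hle ⊢; omega)
        hnd1 hinv'
      have hM1y := M1 (S'.length + 2 * (x :: rest).length) S' (x :: rest) y (le_refl _)
        hnd1 hinv' hy1
      rw [show (y :: S').reverse ++ x :: rest = S'.reverse ++ y :: x :: rest by simp]
      rw [has231_cons, hIH, hM1y, CL5 hnd4 hdd4 hpopw]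
    · rw [scAux, if_neg hc]
      have hvd : ¬ VincD (x :: y :: S') := fun h => hc (bridge_vinc.2 h)
      have hperm : ((y :: S') ++ (x :: rest)).Perm ((x :: y :: S') ++ rest) := by
        have h2 : (x :: y :: S') ++ rest = x :: ((y :: S') ++ rest) := rfl
        rw [h2]; exact List.perm_middle
      have := ih (x :: y :: S') rest (by simp only [List.length_cons] at hle ⊢; omega)
        (hperm.nodup_iff.1 hnd) hvd
      rw [show (x :: y :: S').reverse ++ rest = (y :: S').reverse ++ x :: rest by simp] at this
      exact this

end SccAux
open SccAux in
/-- Sort_n(sc_{1\un{23}}) = Av_n(132, 3214, 4213) for n ≥ 1. -/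
theorem sortingClass_1un23 (n : ℕ) (hn : 1 ≤ n) :
    SortSet [1, 2, 3] {1} n =
      {τ | IsPermList n τ ∧ ¬ ContainsV [1, 3, 2] ∅ τ ∧
        ¬ ContainsV [3, 2, 1, 4] ∅ τ ∧ ¬ ContainsV [4, 2, 1, 3] ∅ τ} := by
  ext τ
  simp only [SortSet, Set.mem_setOf_eq, sc]
  constructor
  · rintro ⟨hp, hns⟩
    have hnd : τ.Nodup := hp.nodup_iff.2 (List.nodup_range' (s := 1) (n := n))
    have hM2 := M2 (2 * τ.length) [] τ (by simp) (by simpa using hnd) not_vincD_nil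
    simp only [List.reverse_nil, List.nil_append] at hM2
    have hBad : ¬ Bad τ := fun h => hns (bridge231.2 (hM2.2 h))
    refine ⟨hp, ?_, ?_, ?_⟩
    · exact fun h => hBad (Or.inl (bridge132.1 h))
    · exact fun h => hBad (Or.inr ((mSplit hnd).2 (Or.inl (bridge3214.1 h))))
    · exact fun h => hBad (Or.inr ((mSplit hnd).2 (Or.inr (bridge4213.1 h))))
  · rintro ⟨hp, h132, h3214, h4213⟩
    have hnd : τ.Nodup := hp.nodup_iff.2 (List.nodup_range' (s := 1) (n := n))
    have hM2 := M2 (2 * τ.length) [] τ (by simp) (by simpa using hnd) not_vincD_nil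
    simp only [List.reverse_nil, List.nil_append] at hM2
    refine ⟨hp, fun hcon => ?_⟩
    have hBad : Bad τ := hM2.1 (bridge231.1 hcon)
    rcases hBad with h | h
    · exact h132 (bridge132.2 h)
    · rcases (mSplit hnd).1 h with h' | h'
      · exact h3214 (bridge3214.2 h')
      · exact h4213 (bridge4213.2 h')
end

section
/- Write a permutation τ ∈ S_n as τ = τ^a n τ^b, where τ^a and τ^b are the subsequences of τ before and after the maximum value n. Then τ ∈ Av_n(132, 3214, 4213) if and only if the following three conditions hold: (1) each element of τ^a is larger than each element of τ^b; (2) τ^a avoids the classical patterns 132 and 321; and (3) τ^b avoids the classical patterns 132 and 213. -/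
open List in
lemma containsV3_iff (p0 p1 p2 : ℕ) (τ : List ℕ) :
    ContainsV [p0, p1, p2] ∅ τ ↔
      ∃ x y z, [x, y, z] <+ τ ∧
        (p0 < p1 ↔ x < y) ∧ (p1 < p0 ↔ y < x) ∧
        (p0 < p2 ↔ x < z) ∧ (p2 < p0 ↔ z < x) ∧
        (p1 < p2 ↔ y < z) ∧ (p2 < p1 ↔ z < y) := by
  constructor
  · rintro ⟨f, hf, hiff, -⟩
    set i0 : Fin ([p0,p1,p2].length) := ⟨0, by simp⟩
    set i1 : Fin ([p0,p1,p2].length) := ⟨1, by simp⟩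
    set i2 : Fin ([p0,p1,p2].length) := ⟨2, by simp⟩
    refine ⟨τ.get (f i0), τ.get (f i1), τ.get (f i2), ?_,
      hiff i0 i1, hiff i1 i0, hiff i0 i2, hiff i2 i0, hiff i1 i2, hiff i2 i1⟩
    have hp : [f i0, f i1, f i2].Pairwise (·.val < ·.val) := by
      have h01 : f i0 < f i1 := hf (by simp only [i0, i1, Fin.mk_lt_mk]; omega)
      have h02 : f i0 < f i2 := hf (by simp only [i0, i2, Fin.mk_lt_mk]; omega)
      have h12 : f i1 < f i2 := hf (by simp only [i1, i2, Fin.mk_lt_mk]; omega)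
      simp only [List.pairwise_cons, List.mem_cons, List.mem_singleton,
        List.not_mem_nil]
      refine ⟨?_, ⟨?_, fun _ h => h.elim, List.Pairwise.nil⟩⟩
      · rintro q (rfl | rfl | h) <;> first | exact h01 | exact h02 | exact h.elim
      · rintro q (rfl | h) <;> first | exact h12 | exact h.elim
    simpa using List.map_getElem_sublist hp
  · rintro ⟨x, y, z, hs, h1, h2, h3, h4, h5, h6⟩
    rw [List.sublist_iff_exists_fin_orderEmbedding_get_eq] at hs
    obtain ⟨f, hf⟩ := hs
    have e0 := hf ⟨0, by simp⟩
    have e1 := hf ⟨1, by simp⟩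
    have e2 := hf ⟨2, by simp⟩
    simp only [List.get] at e0 e1 e2
    refine ⟨f, f.strictMono, ?_, by simp⟩
    rintro ⟨u, hu⟩ ⟨v, hv⟩
    simp only [List.length_cons, List.length_nil] at hu hv
    interval_cases u <;> interval_cases v <;>
      simp_all only [List.get] <;> omega

open List in
lemma containsV4_iff (p0 p1 p2 p3 : ℕ) (τ : List ℕ) :
    ContainsV [p0, p1, p2, p3] ∅ τ ↔
      ∃ x y z w, [x, y, z, w] <+ τ ∧
        (p0 < p1 ↔ x < y) ∧ (p1 < p0 ↔ y < x) ∧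
        (p0 < p2 ↔ x < z) ∧ (p2 < p0 ↔ z < x) ∧
        (p0 < p3 ↔ x < w) ∧ (p3 < p0 ↔ w < x) ∧
        (p1 < p2 ↔ y < z) ∧ (p2 < p1 ↔ z < y) ∧
        (p1 < p3 ↔ y < w) ∧ (p3 < p1 ↔ w < y) ∧
        (p2 < p3 ↔ z < w) ∧ (p3 < p2 ↔ w < z) := by
  constructor
  · rintro ⟨f, hf, hiff, -⟩
    set i0 : Fin ([p0,p1,p2,p3].length) := ⟨0, by simp⟩
    set i1 : Fin ([p0,p1,p2,p3].length) := ⟨1, by simp⟩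
    set i2 : Fin ([p0,p1,p2,p3].length) := ⟨2, by simp⟩
    set i3 : Fin ([p0,p1,p2,p3].length) := ⟨3, by simp⟩
    refine ⟨τ.get (f i0), τ.get (f i1), τ.get (f i2), τ.get (f i3), ?_,
      hiff i0 i1, hiff i1 i0, hiff i0 i2, hiff i2 i0, hiff i0 i3, hiff i3 i0,
      hiff i1 i2, hiff i2 i1, hiff i1 i3, hiff i3 i1, hiff i2 i3, hiff i3 i2⟩
    have h01 : f i0 < f i1 := hf (by simp only [i0, i1, Fin.mk_lt_mk]; omega)
    have h02 : f i0 < f i2 := hf (by simp only [i0, i2, Fin.mk_lt_mk]; omega)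
    have h03 : f i0 < f i3 := hf (by simp only [i0, i3, Fin.mk_lt_mk]; omega)
    have h12 : f i1 < f i2 := hf (by simp only [i1, i2, Fin.mk_lt_mk]; omega)
    have h13 : f i1 < f i3 := hf (by simp only [i1, i3, Fin.mk_lt_mk]; omega)
    have h23 : f i2 < f i3 := hf (by simp only [i2, i3, Fin.mk_lt_mk]; omega)
    have hp : [f i0, f i1, f i2, f i3].Pairwise (·.val < ·.val) := by
      simp only [List.pairwise_cons, List.mem_cons, List.mem_singleton,
        List.not_mem_nil]
      refine ⟨?_, ?_, ⟨?_, fun _ h => h.elim, List.Pairwise.nil⟩⟩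
      · rintro q (rfl | rfl | rfl | h) <;>
          first | exact h01 | exact h02 | exact h03 | exact h.elim
      · rintro q (rfl | rfl | h) <;> first | exact h12 | exact h13 | exact h.elim
      · rintro q (rfl | h) <;> first | exact h23 | exact h.elim
    simpa using List.map_getElem_sublist hp
  · rintro ⟨x, y, z, w, hs, h1, h2, h3, h4, h5, h6, h7, h8, h9, h10, h11, h12⟩
    rw [List.sublist_iff_exists_fin_orderEmbedding_get_eq] at hs
    obtain ⟨f, hf⟩ := hs
    have e0 := hf ⟨0, by simp⟩
    have e1 := hf ⟨1, by simp⟩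
    have e2 := hf ⟨2, by simp⟩
    have e3 := hf ⟨3, by simp⟩
    simp only [List.get] at e0 e1 e2 e3
    refine ⟨f, f.strictMono, ?_, by simp⟩
    rintro ⟨u, hu⟩ ⟨v, hv⟩
    simp only [List.length_cons, List.length_nil] at hu hv
    interval_cases u <;> interval_cases v <;>
      simp_all only [List.get] <;> omega

open List in
lemma c132 (τ : List ℕ) : ContainsV [1,3,2] ∅ τ ↔
    ∃ x y z, [x,y,z] <+ τ ∧ x < z ∧ z < y := by
  rw [containsV3_iff]
  constructor
  · rintro ⟨x,y,z,hs,h1,h2,h3,h4,h5,h6⟩; exact ⟨x,y,z,hs, by omega, by omega⟩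
  · rintro ⟨x,y,z,hs,h1,h2⟩
    exact ⟨x,y,z,hs, by omega, by omega, by omega, by omega, by omega, by omega⟩

open List in
lemma c321 (τ : List ℕ) : ContainsV [3,2,1] ∅ τ ↔
    ∃ x y z, [x,y,z] <+ τ ∧ z < y ∧ y < x := by
  rw [containsV3_iff]
  constructor
  · rintro ⟨x,y,z,hs,h1,h2,h3,h4,h5,h6⟩; exact ⟨x,y,z,hs, by omega, by omega⟩
  · rintro ⟨x,y,z,hs,h1,h2⟩
    exact ⟨x,y,z,hs, by omega, by omega, by omega, by omega, by omega, by omega⟩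

open List in
lemma c213 (τ : List ℕ) : ContainsV [2,1,3] ∅ τ ↔
    ∃ x y z, [x,y,z] <+ τ ∧ y < x ∧ x < z := by
  rw [containsV3_iff]
  constructor
  · rintro ⟨x,y,z,hs,h1,h2,h3,h4,h5,h6⟩; exact ⟨x,y,z,hs, by omega, by omega⟩
  · rintro ⟨x,y,z,hs,h1,h2⟩
    exact ⟨x,y,z,hs, by omega, by omega, by omega, by omega, by omega, by omega⟩

open List in
lemma c3214 (τ : List ℕ) : ContainsV [3,2,1,4] ∅ τ ↔
    ∃ x y z w, [x,y,z,w] <+ τ ∧ z < y ∧ y < x ∧ x < w := by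
  rw [containsV4_iff]
  constructor
  · rintro ⟨x,y,z,w,hs,h1,h2,h3,h4,h5,h6,h7,h8,h9,h10,h11,h12⟩
    exact ⟨x,y,z,w,hs, by omega, by omega, by omega⟩
  · rintro ⟨x,y,z,w,hs,h1,h2,h3⟩
    exact ⟨x,y,z,w,hs, by omega, by omega, by omega, by omega, by omega, by omega,
      by omega, by omega, by omega, by omega, by omega, by omega⟩

open List in
lemma c4213 (τ : List ℕ) : ContainsV [4,2,1,3] ∅ τ ↔
    ∃ x y z w, [x,y,z,w] <+ τ ∧ z < y ∧ y < w ∧ w < x := by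
  rw [containsV4_iff]
  constructor
  · rintro ⟨x,y,z,w,hs,h1,h2,h3,h4,h5,h6,h7,h8,h9,h10,h11,h12⟩
    exact ⟨x,y,z,w,hs, by omega, by omega, by omega⟩
  · rintro ⟨x,y,z,w,hs,h1,h2,h3⟩
    exact ⟨x,y,z,w,hs, by omega, by omega, by omega, by omega, by omega, by omega,
      by omega, by omega, by omega, by omega, by omega, by omega⟩

/-- Writing τ = τᵃ n τᵇ, we have τ ∈ Av_n(132, 3214, 4213) iff (1) every element of τᵃ
exceeds every element of τᵇ, (2) τᵃ ∈ Av(132, 321), and (3) τᵇ ∈ Av(132, 213). -/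
theorem av_132_3214_4213_decomposition (n : ℕ) (hn : 1 ≤ n) (τ a b : List ℕ)
    (hτ : IsPermList n τ) (hab : τ = a ++ n :: b) :
    (¬ ContainsV [1, 3, 2] ∅ τ ∧ ¬ ContainsV [3, 2, 1, 4] ∅ τ ∧
        ¬ ContainsV [4, 2, 1, 3] ∅ τ) ↔
      ((∀ x ∈ a, ∀ y ∈ b, y < x) ∧
        (¬ ContainsV [1, 3, 2] ∅ a ∧ ¬ ContainsV [3, 2, 1] ∅ a) ∧
        (¬ ContainsV [1, 3, 2] ∅ b ∧ ¬ ContainsV [2, 1, 3] ∅ b)) := by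
  subst hab
  have hnd : (a ++ n :: b).Nodup := hτ.nodup_iff.mpr (List.nodup_range' (s := 1) (n := n))
  have hle : ∀ x ∈ a ++ n :: b, x ≤ n := by
    intro x hx
    have := (hτ.mem_iff).mp hx
    rw [List.mem_range'] at this
    omega
  rw [List.nodup_append] at hnd
  obtain ⟨hnda, hndnb, hdisj⟩ := hnd
  have hna : n ∉ a := fun h => hdisj n h n List.mem_cons_self rfl
  have hnb : n ∉ b := by
    rw [List.nodup_cons] at hndnb; exact hndnb.1
  have hxa : ∀ x ∈ a, x < n := fun x hx =>
    lt_of_le_of_ne (hle x (List.mem_append_left _ hx)) (fun h => hna (h ▸ hx))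
  have hxb : ∀ x ∈ b, x < n := fun x hx =>
    lt_of_le_of_ne (hle x (List.mem_append_right _ (List.mem_cons_of_mem _ hx)))
      (fun h => hnb (h ▸ hx))
  have hne : ∀ x ∈ a, ∀ y ∈ b, x ≠ y := fun x hx y hy h =>
    hdisj x hx y (List.mem_cons_of_mem _ hy) h
  rw [c132, c3214, c4213, c132, c321, c132, c213]
  constructor
  · rintro ⟨h1, h2, h3⟩
    refine ⟨?_, ⟨?_, ?_⟩, ⟨?_, ?_⟩⟩
    · intro x hx y hy
      by_contra h
      have hxy : x < y := lt_of_le_of_ne (not_lt.mp h) (hne x hx y hy)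
      exact h1 ⟨x, n, y,
        List.Sublist.append ((List.singleton_sublist).mpr hx)
          (((List.singleton_sublist).mpr hy).cons₂ n),
        hxy, hxb y hy⟩
    · rintro ⟨x, y, z, hs, h4, h5⟩
      exact h1 ⟨x, y, z, hs.trans (List.sublist_append_left a (n :: b)), h4, h5⟩
    · rintro ⟨x, y, z, hs, h4, h5⟩
      refine h2 ⟨x, y, z, n, ?_, h4, h5, hxa x (hs.subset (by simp))⟩
      exact List.Sublist.append hs (((List.nil_sublist b).cons₂ n))
    · rintro ⟨x, y, z, hs, h4, h5⟩
      exact h1 ⟨x, y, z,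
        (hs.trans (List.sublist_cons_self n b)).trans
          (List.sublist_append_right a (n :: b)), h4, h5⟩
    · rintro ⟨x, y, z, hs, h4, h5⟩
      refine h3 ⟨n, x, y, z, ?_, h4, h5, hxb z (hs.subset (by simp))⟩
      exact (hs.cons₂ n).trans (List.sublist_append_right a (n :: b))
  · rintro ⟨hord, ⟨ha132, ha321⟩, ⟨hb132, hb213⟩⟩
    refine ⟨?_, ?_, ?_⟩
    · -- avoids 132
      rintro ⟨x, y, z, hs, hxz, hzy⟩
      rw [List.sublist_append_iff] at hs
      obtain ⟨l₁, l₂, heq, hsa, hsb'⟩ := hs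
      rw [List.sublist_cons_iff] at hsb'
      rcases l₁ with _ | ⟨a1, _ | ⟨a2, _ | ⟨a3, _ | ⟨a4, t⟩⟩⟩⟩
      · simp only [List.nil_append] at heq
        subst heq
        rcases hsb' with hsb | ⟨r, hr, hsb⟩
        · exact hb132 ⟨x, y, z, hsb, hxz, hzy⟩
        · obtain ⟨h1, rfl⟩ : x = n ∧ [y, z] = r := by
            simpa [List.cons.injEq] using hr
          have := hxb z (hsb.subset (by simp)); omega
      · obtain ⟨rfl, heq2⟩ : a1 = x ∧ l₂ = [y, z] := by
          simpa [eq_comm, List.cons.injEq] using heq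
        subst heq2
        have hm1 : a1 ∈ a := hsa.subset (by simp)
        rcases hsb' with hsb | ⟨r, hr, hsb⟩
        · have := hord a1 hm1 y (hsb.subset (by simp)); omega
        · obtain ⟨h1, rfl⟩ : y = n ∧ [z] = r := by
            simpa [List.cons.injEq] using hr
          have := hord a1 hm1 z (hsb.subset (by simp)); omega
      · obtain ⟨rfl, rfl, heq2⟩ : a1 = x ∧ a2 = y ∧ l₂ = [z] := by
          simpa [eq_comm, List.cons.injEq] using heq
        subst heq2
        have hm1 : a1 ∈ a := hsa.subset (by simp)
        have hm2 : a2 ∈ a := hsa.subset (by simp)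
        rcases hsb' with hsb | ⟨r, hr, hsb⟩
        · have := hord a1 hm1 z (hsb.subset (by simp)); omega
        · obtain ⟨h1, rfl⟩ : z = n ∧ ([] : List ℕ) = r := by
            simpa [List.cons.injEq] using hr
          have := hxa a2 hm2; omega
      · obtain ⟨rfl, rfl, rfl, heq2⟩ : a1 = x ∧ a2 = y ∧ a3 = z ∧ l₂ = [] := by
          simpa [eq_comm, List.cons.injEq] using heq
        exact ha132 ⟨a1, a2, a3, hsa, hxz, hzy⟩
      · simp at heq
    · -- avoids 3214
      rintro ⟨x, y, z, w, hs, hzy, hyx, hxw⟩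
      rw [List.sublist_append_iff] at hs
      obtain ⟨l₁, l₂, heq, hsa, hsb'⟩ := hs
      rw [List.sublist_cons_iff] at hsb'
      rcases l₁ with _ | ⟨a1, _ | ⟨a2, _ | ⟨a3, _ | ⟨a4, _ | ⟨a5, t⟩⟩⟩⟩⟩
      · simp only [List.nil_append] at heq
        subst heq
        rcases hsb' with hsb | ⟨r, hr, hsb⟩
        · exact hb213 ⟨y, z, w, (List.sublist_cons_self x _).trans hsb, hzy, by omega⟩
        · obtain ⟨h1, rfl⟩ : x = n ∧ [y, z, w] = r := by
            simpa [List.cons.injEq] using hr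
          have := hxb w (hsb.subset (by simp)); omega
      · obtain ⟨rfl, heq2⟩ : a1 = x ∧ l₂ = [y, z, w] := by
          simpa [eq_comm, List.cons.injEq] using heq
        subst heq2
        have hm1 : a1 ∈ a := hsa.subset (by simp)
        rcases hsb' with hsb | ⟨r, hr, hsb⟩
        · exact hb213 ⟨y, z, w, hsb, hzy, by omega⟩
        · obtain ⟨h1, rfl⟩ : y = n ∧ [z, w] = r := by
            simpa [List.cons.injEq] using hr
          have := hxa a1 hm1; omega
      · obtain ⟨rfl, rfl, heq2⟩ : a1 = x ∧ a2 = y ∧ l₂ = [z, w] := by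
          simpa [eq_comm, List.cons.injEq] using heq
        subst heq2
        have hm1 : a1 ∈ a := hsa.subset (by simp)
        have hm2 : a2 ∈ a := hsa.subset (by simp)
        rcases hsb' with hsb | ⟨r, hr, hsb⟩
        · have := hord a1 hm1 w (hsb.subset (by simp)); omega
        · obtain ⟨h1, rfl⟩ : z = n ∧ [w] = r := by
            simpa [List.cons.injEq] using hr
          have := hxa a2 hm2; omega
      · obtain ⟨rfl, rfl, rfl, heq2⟩ : a1 = x ∧ a2 = y ∧ a3 = z ∧ l₂ = [w] := by
          simpa [eq_comm, List.cons.injEq] using heq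
        subst heq2
        have hm1 : a1 ∈ a := hsa.subset (by simp)
        rcases hsb' with hsb | ⟨r, hr, hsb⟩
        · have := hord a1 hm1 w (hsb.subset (by simp)); omega
        · exact ha321 ⟨a1, a2, a3, hsa, hzy, hyx⟩
      · obtain ⟨rfl, rfl, rfl, rfl, heq2⟩ :
            a1 = x ∧ a2 = y ∧ a3 = z ∧ a4 = w ∧ l₂ = [] := by
          simpa [eq_comm, List.cons.injEq] using heq
        refine ha321 ⟨a1, a2, a3, ?_, hzy, hyx⟩
        exact ((((List.nil_sublist [a4]).cons₂ a3).cons₂ a2).cons₂ a1).trans hsa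
      · simp at heq
    · -- avoids 4213
      rintro ⟨x, y, z, w, hs, hzy, hyw, hwx⟩
      rw [List.sublist_append_iff] at hs
      obtain ⟨l₁, l₂, heq, hsa, hsb'⟩ := hs
      rw [List.sublist_cons_iff] at hsb'
      rcases l₁ with _ | ⟨a1, _ | ⟨a2, _ | ⟨a3, _ | ⟨a4, _ | ⟨a5, t⟩⟩⟩⟩⟩
      · simp only [List.nil_append] at heq
        subst heq
        rcases hsb' with hsb | ⟨r, hr, hsb⟩
        · exact hb213 ⟨y, z, w, (List.sublist_cons_self x _).trans hsb, hzy, hyw⟩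
        · obtain ⟨h1, rfl⟩ : x = n ∧ [y, z, w] = r := by
            simpa [List.cons.injEq] using hr
          exact hb213 ⟨y, z, w, hsb, hzy, hyw⟩
      · obtain ⟨rfl, heq2⟩ : a1 = x ∧ l₂ = [y, z, w] := by
          simpa [eq_comm, List.cons.injEq] using heq
        subst heq2
        rcases hsb' with hsb | ⟨r, hr, hsb⟩
        · exact hb213 ⟨y, z, w, hsb, hzy, hyw⟩
        · obtain ⟨h1, rfl⟩ : y = n ∧ [z, w] = r := by
            simpa [List.cons.injEq] using hr
          have := hxb w (hsb.subset (by simp)); omega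
      · obtain ⟨rfl, rfl, heq2⟩ : a1 = x ∧ a2 = y ∧ l₂ = [z, w] := by
          simpa [eq_comm, List.cons.injEq] using heq
        subst heq2
        have hm2 : a2 ∈ a := hsa.subset (by simp)
        rcases hsb' with hsb | ⟨r, hr, hsb⟩
        · have := hord a2 hm2 w (hsb.subset (by simp)); omega
        · obtain ⟨h1, rfl⟩ : z = n ∧ [w] = r := by
            simpa [List.cons.injEq] using hr
          have := hxa a2 hm2; omega
      · obtain ⟨rfl, rfl, rfl, heq2⟩ : a1 = x ∧ a2 = y ∧ a3 = z ∧ l₂ = [w] := by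
          simpa [eq_comm, List.cons.injEq] using heq
        subst heq2
        have hm1 : a1 ∈ a := hsa.subset (by simp)
        have hm2 : a2 ∈ a := hsa.subset (by simp)
        rcases hsb' with hsb | ⟨r, hr, hsb⟩
        · have := hord a2 hm2 w (hsb.subset (by simp)); omega
        · obtain ⟨h1, rfl⟩ : w = n ∧ ([] : List ℕ) = r := by
            simpa [List.cons.injEq] using hr
          have := hxa a1 hm1; omega
      · obtain ⟨rfl, rfl, rfl, rfl, heq2⟩ :
            a1 = x ∧ a2 = y ∧ a3 = z ∧ a4 = w ∧ l₂ = [] := by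
          simpa [eq_comm, List.cons.injEq] using heq
        refine ha321 ⟨a1, a2, a3, ?_, hzy, by omega⟩
        exact ((((List.nil_sublist [a4]).cons₂ a3).cons₂ a2).cons₂ a1).trans hsa
      · simp at heq
end

section
/- Let k ≥ 3 and let σ be a vincular pattern of length k whose underlying permutation is the decreasing permutation k(k−1)⋯1, with an arbitrary set of adjacency (underline) constraints. Then for every n, Sort_n(sc_σ) = Av_n(rev(σ), 132), where rev(σ) is the vincular pattern obtained by reversing σ (reading its entries right to left, so that its underlying permutation is 12⋯k and underlined adjacent pairs remain adjacent). -/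
def elt (l : List ℕ) (i : ℕ) : ℕ := l.getD i 0

lemma elt_eq_get (l : List ℕ) (i : ℕ) (h : i < l.length) : elt l i = l[i] :=
  List.getD_eq_getElem l 0 h

lemma elt_cons_succ (x : ℕ) (l : List ℕ) (n : ℕ) : elt (x :: l) (n + 1) = elt l n := by
  simp [elt]

lemma elt_cons_zero (x : ℕ) (l : List ℕ) : elt (x :: l) 0 = x := rfl

lemma containsV_iff (ρ : List ℕ) (B : Set ℕ) (τ : List ℕ) :
    ContainsV ρ B τ ↔ ∃ g : ℕ → ℕ,
      (∀ i, i < ρ.length → g i < τ.length) ∧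
      (∀ i j, i < j → j < ρ.length → g i < g j) ∧
      (∀ i j, i < ρ.length → j < ρ.length →
        (elt ρ i < elt ρ j ↔ elt τ (g i) < elt τ (g j))) ∧
      (∀ a ∈ B, a + 1 < ρ.length → g (a + 1) = g a + 1) := by
  constructor
  · rintro ⟨f, hmono, hiso, hadj⟩
    refine ⟨fun i => if h : i < ρ.length then (f ⟨i, h⟩ : ℕ) else 0, ?_, ?_, ?_, ?_⟩
    · intro i hi; simp only [dif_pos hi]; exact (f ⟨i, hi⟩).isLt
    · intro i j hij hj
      have hi : i < ρ.length := hij.trans hj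
      simp only [dif_pos hi, dif_pos hj]
      exact hmono (show (⟨i, hi⟩ : Fin ρ.length) < ⟨j, hj⟩ from hij)
    · intro i j hi hj
      simp only [dif_pos hi, dif_pos hj]
      rw [elt_eq_get _ _ hi, elt_eq_get _ _ hj,
        elt_eq_get _ _ (f ⟨i, hi⟩).isLt, elt_eq_get _ _ (f ⟨j, hj⟩).isLt]
      simpa [List.get_eq_getElem] using hiso ⟨i, hi⟩ ⟨j, hj⟩
    · intro a ha h
      simp only [dif_pos h, dif_pos (Nat.lt_of_succ_lt h)]
      exact hadj a ha h
  · rintro ⟨g, hb, hm, hiso, hadj⟩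
    refine ⟨fun i => ⟨g i, hb i i.isLt⟩, ?_, ?_, ?_⟩
    · intro a b hab
      exact hm a b hab b.isLt
    · intro a b
      have := hiso a b a.isLt b.isLt
      rwa [elt_eq_get _ _ a.isLt, elt_eq_get _ _ b.isLt,
        elt_eq_get _ _ (hb a a.isLt), elt_eq_get _ _ (hb b b.isLt)] at this
      
    · intro a ha h
      exact hadj a ha h

lemma contains_cons {ρ : List ℕ} {B : Set ℕ} {s : List ℕ} (y : ℕ)
    (h : ContainsV ρ B s) : ContainsV ρ B (y :: s) := by
  rw [containsV_iff] at h ⊢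
  obtain ⟨g, hb, hm, hiso, hadj⟩ := h
  refine ⟨fun i => g i + 1, ?_, ?_, ?_, ?_⟩
  · intro i hi; simpa using Nat.succ_lt_succ (hb i hi)
  · intro i j hij hj; exact Nat.succ_lt_succ (hm i j hij hj)
  · intro i j hi hj; rw [elt_cons_succ, elt_cons_succ]; exact hiso i j hi hj
  · intro a ha h; simp only []; rw [hadj a ha h]

lemma contains_append {ρ : List ℕ} {B : Set ℕ} {l l' : List ℕ}
    (h : ContainsV ρ B l) : ContainsV ρ B (l ++ l') := by
  rw [containsV_iff] at h ⊢
  obtain ⟨g, hb, hm, hiso, hadj⟩ := h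
  refine ⟨g, ?_, hm, ?_, hadj⟩
  · intro i hi; have := hb i hi; simp only [List.length_append]; omega
  · intro i j hi hj
    have hgi := hb i hi
    have hgj := hb j hj
    rw [elt_eq_get _ _ (by simp only [List.length_append]; omega : g i < (l ++ l').length),
      elt_eq_get _ _ (by simp only [List.length_append]; omega : g j < (l ++ l').length),
      List.getElem_append_left (hb i hi), List.getElem_append_left (hb j hj),
      ← elt_eq_get _ _ (hb i hi), ← elt_eq_get _ _ (hb j hj)]
    exact hiso i j hi hj

lemma not_contains_nil {ρ : List ℕ} {B : Set ℕ} (h0 : 0 < ρ.length) :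
    ¬ ContainsV ρ B [] := by
  rw [containsV_iff]
  rintro ⟨g, hb, -, -, -⟩
  simpa using hb 0 h0

lemma scAux_nil (σ : List ℕ) (A : Set ℕ) (s : List ℕ) : scAux σ A s [] = s := by
  rw [scAux]

lemma scAux_empty (σ : List ℕ) (A : Set ℕ) (x : ℕ) (t : List ℕ) :
    scAux σ A [] (x :: t) = scAux σ A [x] t := by rw [scAux]

lemma scAux_pop (σ : List ℕ) (A : Set ℕ) (x y : ℕ) (s t : List ℕ)
    (h : ContainsV σ A (x :: y :: s)) :
    scAux σ A (y :: s) (x :: t) = y :: scAux σ A s (x :: t) := by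
  rw [scAux]; simp [h]

lemma scAux_push (σ : List ℕ) (A : Set ℕ) (x y : ℕ) (s t : List ℕ)
    (h : ¬ ContainsV σ A (x :: y :: s)) :
    scAux σ A (y :: s) (x :: t) = scAux σ A (x :: y :: s) t := by
  rw [scAux]; simp [h]

lemma stack_sublist_aux (σ : List ℕ) (A : Set ℕ) :
    ∀ (N : ℕ) (s t : List ℕ), s.length + 2 * t.length ≤ N → List.Sublist s (scAux σ A s t) := by
  intro N
  induction N with
  | zero =>
    intro s t h
    have : t = [] := by cases t with
      | nil => rfl
      | cons a b => simp [List.length_cons] at h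
    subst this
    rw [scAux_nil]
  | succ N ih =>
    intro s t h
    match t with
    | [] => rw [scAux_nil]
    | x :: rest =>
      match s with
      | [] => exact List.nil_sublist _
      | y :: s' =>
        by_cases hC : ContainsV σ A (x :: y :: s')
        · rw [scAux_pop _ _ _ _ _ _ hC]
          exact (ih s' (x :: rest) (by simp [List.length_cons] at h ⊢; omega)).cons₂ y
        · rw [scAux_push _ _ _ _ _ _ hC]
          exact (List.sublist_cons_self x (y :: s')).trans
            (ih (x :: y :: s') rest (by simp [List.length_cons] at h ⊢; omega))

lemma stack_sublist (σ : List ℕ) (A : Set ℕ) (s t : List ℕ) : List.Sublist s (scAux σ A s t) :=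
  stack_sublist_aux σ A _ s t le_rfl

lemma run (σ : List ℕ) (A : Set ℕ) :
    ∀ (p : List ℕ), (∀ q x', (q ++ [x']) <+: p → ¬ ContainsV σ A (x' :: q.reverse)) →
      ∀ rest, scAux σ A [] (p ++ rest) = scAux σ A p.reverse rest := by
  intro p
  induction p using List.reverseRecOn with
  | nil => intro _ rest; simp
  | append_singleton p' w ih =>
    intro hp rest
    have h1 : scAux σ A [] (p' ++ (w :: rest)) = scAux σ A p'.reverse (w :: rest) :=
      ih (fun q x' hpre => hp q x' (hpre.trans (List.prefix_append _ _))) (w :: rest)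
    have hnc : ¬ ContainsV σ A (w :: p'.reverse) := hp p' w (List.prefix_refl _)
    have hrev : (p' ++ [w]).reverse = w :: p'.reverse := by simp
    have h2 : (p' ++ [w]) ++ rest = p' ++ (w :: rest) := by simp
    rw [h2, h1, hrev]
    cases hp' : p'.reverse with
    | nil => rw [scAux_empty]
    | cons y s' =>
      rw [hp'] at hnc
      rw [scAux_push _ _ _ _ _ _ hnc]

lemma elt_reverse (l : List ℕ) (n : ℕ) (h : n < l.length) :
    elt l.reverse n = elt l (l.length - 1 - n) := by
  have h' : n < l.reverse.length := by simpa using h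
  rw [elt_eq_get _ _ h', elt_eq_get _ _ (by omega : l.length - 1 - n < l.length),
    List.getElem_reverse]

lemma rev_core (ρ ρ' : List ℕ) (B B' : Set ℕ) (l : List ℕ)
    (hlen : ρ'.length = ρ.length)
    (hval : ∀ i, i < ρ.length → elt ρ' i = elt ρ (ρ.length - 1 - i))
    (hBB' : ∀ b ∈ B', b + 1 < ρ.length → ∃ a ∈ B, a + 1 < ρ.length ∧ a = ρ.length - 2 - b)
    (h : ContainsV ρ B l.reverse) : ContainsV ρ' B' l := by
  rw [containsV_iff] at h ⊢
  obtain ⟨g, hb, hm, hiso, hadj⟩ := h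
  set m := ρ.length with hm_def
  set L := l.length with hL_def
  have hbL : ∀ i, i < m → g i < L := by
    intro i hi; have := hb i hi; simpa using this
  refine ⟨fun j => L - 1 - g (m - 1 - j), ?_, ?_, ?_, ?_⟩
  · intro j hj
    rw [hlen] at hj
    have := hbL (m - 1 - j) (by omega)
    simp only []
    omega
  · intro j1 j2 hj12 hj2
    rw [hlen] at hj2
    have h1 := hm (m - 1 - j2) (m - 1 - j1) (by omega) (by omega)
    have h2 := hbL (m - 1 - j1) (by omega)
    simp only []
    omega
  · intro i j hi hj
    rw [hlen] at hi hj
    have e1 := hval i hi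
    have e2 := hval j hj
    have h1 := hiso (m - 1 - i) (m - 1 - j) (by omega) (by omega)
    have r1 := elt_reverse l (g (m - 1 - i)) (hbL _ (by omega))
    have r2 := elt_reverse l (g (m - 1 - j)) (hbL _ (by omega))
    simp only []
    rw [e1, e2, h1, r1, r2]
  · intro b hbB hb1
    rw [hlen] at hb1
    obtain ⟨a, haB, ha1, ha2⟩ := hBB' b hbB hb1
    have key := hadj a haB ha1
    have e1 : m - 1 - (b + 1) = a := by omega
    have e2 : m - 1 - b = a + 1 := by omega
    simp only []
    rw [e1, e2, key]
    have h2 := hbL (a + 1) ha1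
    have h3 := hm a (a + 1) (by omega) ha1
    omega

lemma sublist231 {l : List ℕ} {c d x : ℕ} (h : List.Sublist [d, x, c] l)
    (h1 : c < d) (h2 : d < x) : ContainsV [2, 3, 1] ∅ l := by
  obtain ⟨is, his, hpw⟩ := List.sublist_eq_map_getElem h
  match is, his with
  | [i0, i1, i2], his =>
    simp only [List.map_cons, List.map_nil, List.cons.injEq, and_true] at his
    obtain ⟨hd, hx, hc⟩ := his
    simp only [List.pairwise_cons, List.mem_cons, List.mem_singleton,
      List.not_mem_nil] at hpw
    have h01 : (i0 : ℕ) < (i1 : ℕ) := hpw.1 i1 (Or.inl rfl)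
    have h12 : (i1 : ℕ) < (i2 : ℕ) := hpw.2.1 i2 (Or.inl rfl)
    have g0 : elt l (i0 : ℕ) = d := by
      rw [hd]; exact elt_eq_get _ _ i0.isLt
    have g1 : elt l (i1 : ℕ) = x := by
      rw [hx]; exact elt_eq_get _ _ i1.isLt
    have g2 : elt l (i2 : ℕ) = c := by
      rw [hc]; exact elt_eq_get _ _ i2.isLt
    have p0 : elt [2, 3, 1] 0 = 2 := rfl
    have p1 : elt [2, 3, 1] 1 = 3 := rfl
    have p2 : elt [2, 3, 1] 2 = 1 := rfl
    rw [containsV_iff]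
    refine ⟨fun n => if n = 0 then (i0 : ℕ) else if n = 1 then (i1 : ℕ) else (i2 : ℕ),
      ?_, ?_, ?_, ?_⟩
    · intro i hi
      simp only []
      split
      · exact i0.isLt
      · split
        · exact i1.isLt
        · exact i2.isLt
    · intro i j hij hj
      simp only [List.length_cons, List.length_nil] at hj
      interval_cases j <;> interval_cases i <;> simp <;> omega
    · intro i j hi hj
      simp only [List.length_cons, List.length_nil] at hi hj
      interval_cases i <;> interval_cases j <;>
        simp [p0, p1, p2, g0, g1, g2] <;> omega
    · intro a ha; exact absurd ha (Set.notMem_empty a)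

lemma main1 (σ : List ℕ) (A : Set ℕ) (hk3 : 3 ≤ σ.length)
    (hσ : ∀ i j, i < σ.length → j < σ.length → (elt σ i < elt σ j ↔ j < i)) :
    ∀ (s : List ℕ) (x : ℕ) (t : List ℕ), ¬ ContainsV σ A s → ContainsV σ A (x :: s) →
      ∃ c d, c < d ∧ d < x ∧ List.Sublist [d, x, c] (scAux σ A s (x :: t)) := by
  intro s
  induction s with
  | nil =>
    intro x t hs hxs
    exfalso
    obtain ⟨g, hb, hm, -, -⟩ := (containsV_iff _ _ _).mp hxs
    have b2 := hb 2 (by omega)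
    have m1 := hm 0 1 (by omega) (by omega)
    have m2 := hm 1 2 (by omega) (by omega)
    simp only [List.length_cons, List.length_nil] at b2
    omega
  | cons y s2 ih =>
    intro x t hs hxs
    obtain ⟨g, hb, hm, hiso, hadj⟩ := (containsV_iff _ _ _).mp hxs
    have hlen : (x :: y :: s2).length = s2.length + 2 := by simp
    -- g 0 = 0
    have hg0 : g 0 = 0 := by
      by_contra h0
      apply hs
      rw [containsV_iff]
      have hpos : ∀ i, i < σ.length → 1 ≤ g i := by
        intro i hi
        rcases Nat.eq_zero_or_pos i with h | h
        · subst h; omega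
        · have := hm 0 i h hi; omega
      refine ⟨fun i => g i - 1, ?_, ?_, ?_, ?_⟩
      · intro i hi
        have := hb i hi
        simp only [List.length_cons] at this ⊢
        omega
      · intro i j hij hj
        have := hm i j hij hj
        have := hpos i (hij.trans hj)
        simp only []
        omega
      · intro i j hi hj
        have hvi : elt (y :: s2) (g i - 1) = elt (x :: y :: s2) (g i) := by
          have e : g i = (g i - 1) + 1 := by have := hpos i hi; omega
          conv_rhs => rw [e]
          rw [elt_cons_succ]
        have hvj : elt (y :: s2) (g j - 1) = elt (x :: y :: s2) (g j) := by
          have e : g j = (g j - 1) + 1 := by have := hpos j hj; omega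
          conv_rhs => rw [e]
          rw [elt_cons_succ]
        simp only []
        rw [hvi, hvj]
        exact hiso i j hi hj
      · intro a ha h
        have key := hadj a ha h
        have := hpos a (Nat.lt_of_succ_lt h)
        simp only []
        omega
    have hx0 : elt (x :: y :: s2) (g 0) = x := by rw [hg0]; rfl
    have hvlt : ∀ i, 0 < i → i < σ.length → elt (x :: y :: s2) (g i) < x := by
      intro i h0 hi
      have h1 : elt σ i < elt σ 0 := (hσ i 0 hi (by omega)).mpr h0
      have := (hiso i 0 hi (by omega)).mp h1
      rwa [hx0] at this
    have hg1pos : 1 ≤ g 1 := by have := hm 0 1 (by omega) (by omega); omega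
    have hg2 : 2 ≤ g 2 := by
      have := hm 0 1 (by omega) (by omega)
      have := hm 1 2 (by omega) (by omega)
      omega
    have hb2 : g 2 < s2.length + 2 := by have := hb 2 (by omega); rwa [hlen] at this
    have hs2 : ¬ ContainsV σ A s2 := fun hh => hs (contains_cons y hh)
    by_cases hg1 : g 1 = 1
    · -- y is the top chain element
      have hy : elt (x :: y :: s2) (g 1) = y := by rw [hg1]; rfl
      have hyx : y < x := by
        have := hvlt 1 (by omega) (by omega)
        rwa [hy] at this
      have hcy : elt (x :: y :: s2) (g 2) < y := by
        have h1 : elt σ 2 < elt σ 1 := (hσ 2 1 (by omega) (by omega)).mpr (by omega)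
        have := (hiso 2 1 (by omega) (by omega)).mp h1
        rwa [hy] at this
      set c := elt (x :: y :: s2) (g 2) with hc_def
      have hc_mem : c ∈ s2 := by
        have e : g 2 = (g 2 - 2) + 1 + 1 := by omega
        have hlt : g 2 - 2 < s2.length := by omega
        rw [hc_def, e, elt_cons_succ, elt_cons_succ, elt_eq_get _ _ hlt]
        exact List.getElem_mem hlt
      rw [scAux_pop _ _ _ _ _ _ hxs]
      by_cases h2 : ContainsV σ A (x :: s2)
      · obtain ⟨c', d', hcd, hdx, hsub⟩ := ih x t hs2 h2
        exact ⟨c', d', hcd, hdx, hsub.cons y⟩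
      · obtain ⟨z, s3, rfl⟩ : ∃ z s3, s2 = z :: s3 := by
          cases s2 with
          | nil => simp at hc_mem
          | cons z s3 => exact ⟨z, s3, rfl⟩
        rw [scAux_push _ _ _ _ _ _ h2]
        refine ⟨c, y, hcy, hyx, ?_⟩
        have h4 : List.Sublist [x, c] (x :: z :: s3) :=
          (List.singleton_sublist.mpr hc_mem).cons₂ x
        exact (h4.trans (stack_sublist σ A (x :: z :: s3) t)).cons₂ y
    · -- shift the occurrence off y
      have hg1' : 2 ≤ g 1 := by omega
      have hposs : ∀ i, 1 ≤ i → i < σ.length → 2 ≤ g i := by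
        intro i h1 hi
        rcases Nat.lt_or_ge 1 i with h | h
        · have := hm 1 i h hi; omega
        · have : i = 1 := by omega
          subst this; omega
      have hnew : ContainsV σ A (x :: s2) := by
        rw [containsV_iff]
        refine ⟨fun i => if i = 0 then 0 else g i - 1, ?_, ?_, ?_, ?_⟩
        · intro i hi
          simp only [List.length_cons]
          split
          · omega
          · have := hb i hi; rw [hlen] at this; omega
        · intro i j hij hj
          have hgj := hposs j (by omega) hj
          simp only []
          split
          · split
            · omega
            · omega
          · split
            · omega
            · have := hm i j hij hj; omega
        · intro i j hi hj
          have hval : ∀ i', i' < σ.length →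
              elt (x :: s2) (if i' = 0 then 0 else g i' - 1) =
                elt (x :: y :: s2) (g i') := by
            intro i' hi'
            split
            · next h => subst h; rw [hg0]; rfl
            · next h =>
              have h2 := hposs i' (by omega) hi'
              have e1 : g i' - 1 = (g i' - 2) + 1 := by omega
              have e2 : g i' = (g i' - 2) + 1 + 1 := by omega
              rw [e1, elt_cons_succ]
              conv_rhs => rw [e2]
              rw [elt_cons_succ, elt_cons_succ]
          simp only []
          rw [hval i hi, hval j hj]
          exact hiso i j hi hj
        · intro a ha h
          have key := hadj a ha h
          rcases Nat.eq_zero_or_pos a with h0 | h0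
          · exfalso; subst h0; simp only [Nat.zero_add] at key; omega
          · have h2 := hposs a (by omega) (Nat.lt_of_succ_lt h)
            have e1 : a + 1 ≠ 0 := by omega
            have e2 : a ≠ 0 := by omega
            simp only [if_neg e1, if_neg e2]
            omega
      rw [scAux_pop _ _ _ _ _ _ hxs]
      obtain ⟨c', d', hcd, hdx, hsub⟩ := ih x t hs2 hnew
      exact ⟨c', d', hcd, hdx, hsub.cons y⟩

lemma elt_take (l : List ℕ) (m n : ℕ) (hn : n < m) (h : n < l.length) :
    elt (l.take m) n = elt l n := by
  rw [elt_eq_get _ _ (by rw [List.length_take]; omega), elt_eq_get _ _ h,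
    List.getElem_take]

lemma contains_take {ρ : List ℕ} {B : Set ℕ} {τ : List ℕ} (h0 : 0 < ρ.length)
    (h : ContainsV ρ B τ) : ∃ m, 0 < m ∧ m ≤ τ.length ∧ ContainsV ρ B (τ.take m) := by
  rw [containsV_iff] at h
  obtain ⟨g, hb, hm, hiso, hadj⟩ := h
  have hlast := hb (ρ.length - 1) (by omega)
  have hle : ∀ i, i < ρ.length → g i < g (ρ.length - 1) + 1 := by
    intro i hi
    rcases Nat.lt_or_ge i (ρ.length - 1) with h' | h'
    · have := hm i (ρ.length - 1) h' (by omega); omega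
    · have he : i = ρ.length - 1 := by omega
      rw [he]; omega
  refine ⟨g (ρ.length - 1) + 1, by omega, by omega, ?_⟩
  rw [containsV_iff]
  refine ⟨g, ?_, hm, ?_, hadj⟩
  · intro i hi
    rw [List.length_take]
    have := hb i hi
    have := hle i hi
    omega
  · intro i j hi hj
    rw [elt_take _ _ _ (hle i hi) (hb i hi), elt_take _ _ _ (hle j hj) (hb j hj)]
    exact hiso i j hi hj

lemma sigk_len (k : ℕ) : ((List.range' 1 k).reverse).length = k := by simp

lemma elt_sigk (k i : ℕ) (h : i < k) : elt ((List.range' 1 k).reverse) i = k - i := by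
  rw [elt_eq_get _ _ (by simp [h] : i < ((List.range' 1 k).reverse).length),
    List.getElem_reverse]
  rw [List.getElem_range']
  simp only [List.length_range']
  omega

lemma elt_Rk (k i : ℕ) (h : i < k) : elt (List.range' 1 k) i = 1 + i := by
  rw [elt_eq_get _ _ (by simp [h] : i < (List.range' 1 k).length), List.getElem_range']
  omega

lemma sigk_dec (k : ℕ) : ∀ i j, i < ((List.range' 1 k).reverse).length →
    j < ((List.range' 1 k).reverse).length →
    (elt ((List.range' 1 k).reverse) i < elt ((List.range' 1 k).reverse) j ↔ j < i) := by
  intro i j hi hj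
  rw [sigk_len] at hi hj
  rw [elt_sigk k i hi, elt_sigk k j hj]
  omega

lemma rev1 (k : ℕ) (hk : 3 ≤ k) (A : Set ℕ) (hA : ∀ a ∈ A, a + 2 ≤ k) (l : List ℕ)
    (h : ContainsV ((List.range' 1 k).reverse) A l.reverse) :
    ContainsV (List.range' 1 k) ((fun a => k - 2 - a) '' A) l := by
  refine rev_core ((List.range' 1 k).reverse) (List.range' 1 k) A _ l ?_ ?_ ?_ h
  · simp
  · intro i hi
    rw [sigk_len] at hi
    rw [sigk_len, elt_Rk k i hi, elt_sigk k (k - 1 - i) (by omega)]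
    omega
  · intro b hb hb1
    rw [sigk_len] at hb1
    obtain ⟨a0, ha0, rfl⟩ := hb
    have hA0 := hA a0 ha0
    have hb1' : k - 2 - a0 + 1 < k := by
      have : (fun a => k - 2 - a) a0 = k - 2 - a0 := rfl
      rw [this] at hb1; exact hb1
    refine ⟨a0, ha0, ?_, ?_⟩
    · rw [sigk_len]; omega
    · rw [sigk_len]
      show a0 = k - 2 - (k - 2 - a0)
      omega

lemma rev2 (k : ℕ) (hk : 3 ≤ k) (A : Set ℕ) (hA : ∀ a ∈ A, a + 2 ≤ k) (l : List ℕ)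
    (h : ContainsV (List.range' 1 k) ((fun a => k - 2 - a) '' A) l) :
    ContainsV ((List.range' 1 k).reverse) A l.reverse := by
  refine rev_core (List.range' 1 k) ((List.range' 1 k).reverse)
    ((fun a => k - 2 - a) '' A) A l.reverse ?_ ?_ ?_ ?_
  · simp
  · intro i hi
    simp only [List.length_range'] at hi
    rw [List.length_range', elt_sigk k i hi, elt_Rk k (k - 1 - i) (by omega)]
    omega
  · intro b hb hb1
    simp only [List.length_range'] at hb1
    refine ⟨k - 2 - b, ⟨b, hb, rfl⟩, ?_, ?_⟩
    · rw [List.length_range']; omega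
    · rw [List.length_range']
  · rw [List.reverse_reverse]; exact h

lemma r231 (l : List ℕ) (h : ContainsV [2, 3, 1] ∅ l.reverse) :
    ContainsV [1, 3, 2] ∅ l := by
  refine rev_core [2, 3, 1] [1, 3, 2] ∅ ∅ l rfl ?_ ?_ h
  · intro i hi
    simp only [List.length_cons, List.length_nil] at hi ⊢
    interval_cases i <;> rfl
  · intro b hb; exact absurd hb (Set.notMem_empty b)

lemma r132 (l : List ℕ) (h : ContainsV [1, 3, 2] ∅ l) :
    ContainsV [2, 3, 1] ∅ l.reverse := by
  refine rev_core [1, 3, 2] [2, 3, 1] ∅ ∅ l.reverse rfl ?_ ?_ ?_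
  · intro i hi
    simp only [List.length_cons, List.length_nil] at hi ⊢
    interval_cases i <;> rfl
  · intro b hb; exact absurd hb (Set.notMem_empty b)
  · rw [List.reverse_reverse]; exact h

lemma norun (σ : List ℕ) (A : Set ℕ) (τ : List ℕ)
    (h : ∀ q x', (q ++ [x']) <+: τ → ¬ ContainsV σ A (x' :: q.reverse)) :
    sc σ A τ = τ.reverse := by
  have h2 := run σ A τ h []
  rw [List.append_nil] at h2
  rw [sc, h2, scAux_nil]

lemma popcase (k : ℕ) (hk : 3 ≤ k) (A : Set ℕ) (τ : List ℕ)
    (hpop : ∃ m, m ≤ τ.length ∧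
      ContainsV ((List.range' 1 k).reverse) A ((τ.take m).reverse)) :
    ContainsV [2, 3, 1] ∅ (sc ((List.range' 1 k).reverse) A τ) := by
  classical
  set σk := (List.range' 1 k).reverse with hσk
  set m₀ := Nat.find hpop with hm₀
  have hspec := Nat.find_spec hpop
  rw [← hm₀] at hspec
  have hmin : ∀ m, m < m₀ →
      ¬(m ≤ τ.length ∧ ContainsV σk A ((τ.take m).reverse)) :=
    fun m hm => Nat.find_min hpop hm
  have hσlen : σk.length = k := by rw [hσk]; simp
  have hm0pos : 0 < m₀ := by
    by_contra h0
    have h1 : m₀ = 0 := by omega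
    have h2 := hspec.2
    rw [h1] at h2
    simp only [List.take_zero, List.reverse_nil] at h2
    exact not_contains_nil (by omega) h2
  have hm0le := hspec.1
  have hidx : m₀ - 1 < τ.length := by omega
  set p := τ.take (m₀ - 1) with hp
  set x := τ[m₀ - 1] with hx
  have hplen : p.length = m₀ - 1 := by rw [hp, List.length_take]; omega
  have hpx : p ++ [x] = τ.take m₀ := by
    have h3 := List.take_concat_get hidx
    rw [List.concat_eq_append] at h3
    rw [hp, hx, h3]
    congr 1
    omega
  have hτsplit : τ = p ++ (x :: τ.drop m₀) := by
    conv_lhs => rw [← List.take_append_drop m₀ τ]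
    rw [← hpx, List.append_assoc]
    rfl
  have hrunhyp : ∀ q x', (q ++ [x']) <+: p → ¬ ContainsV σk A (x' :: q.reverse) := by
    intro q x' hpre
    have hpre2 : (q ++ [x']) <+: τ := hpre.trans (by rw [hp]; exact List.take_prefix _ _)
    have hqeq : q ++ [x'] = τ.take (q.length + 1) := by
      have h4 := List.prefix_iff_eq_take.mp hpre2
      simpa using h4
    have hlen2 := hpre.length_le
    rw [hplen] at hlen2
    simp only [List.length_append, List.length_cons, List.length_nil] at hlen2
    have hlt : q.length + 1 < m₀ := by omega
    intro hcon
    apply hmin _ hlt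
    refine ⟨by omega, ?_⟩
    rw [← hqeq, List.reverse_append]
    simpa using hcon
  have hrun : sc σk A τ = scAux σk A p.reverse (x :: τ.drop m₀) := by
    rw [sc]
    conv_lhs => rw [hτsplit]
    exact run σk A p hrunhyp _
  have hnp : ¬ ContainsV σk A p.reverse := by
    intro hcon
    exact hmin (m₀ - 1) (by omega) ⟨by omega, hcon⟩
  have hcx : ContainsV σk A (x :: p.reverse) := by
    have h2 := hspec.2
    rw [← hpx, List.reverse_append] at h2
    simpa using h2
  obtain ⟨c, d, h1, h2, h3⟩ :=
    main1 σk A (by omega) (sigk_dec k) p.reverse x (τ.drop m₀) hnp hcx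
  rw [hrun]
  exact sublist231 h3 h1 h2

lemma key_equiv (k : ℕ) (hk : 3 ≤ k) (A : Set ℕ) (hA : ∀ a ∈ A, a + 2 ≤ k)
    (τ : List ℕ) :
    ¬ ContainsV [2, 3, 1] ∅ (sc ((List.range' 1 k).reverse) A τ) ↔
      (¬ ContainsV (List.range' 1 k) ((fun a => k - 2 - a) '' A) τ ∧
        ¬ ContainsV [1, 3, 2] ∅ τ) := by
  constructor
  · intro h
    constructor
    · intro hR
      apply h
      apply popcase k hk A τ
      obtain ⟨m, hm0, hmle, hc⟩ := contains_take (by simp; omega) hR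
      exact ⟨m, hmle, rev2 k hk A hA (τ.take m) hc⟩
    · intro h132
      apply h
      by_cases hpop : ∃ m, m ≤ τ.length ∧
          ContainsV ((List.range' 1 k).reverse) A ((τ.take m).reverse)
      · exact popcase k hk A τ hpop
      · have hno : ∀ q x', (q ++ [x']) <+: τ →
            ¬ ContainsV ((List.range' 1 k).reverse) A (x' :: q.reverse) := by
          intro q x' hpre hcon
          apply hpop
          have hqeq : q ++ [x'] = τ.take (q.length + 1) := by
            have h4 := List.prefix_iff_eq_take.mp hpre
            simpa using h4
          refine ⟨q.length + 1, ?_, ?_⟩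
          · have := hpre.length_le; simpa using this
          · rw [← hqeq, List.reverse_append]
            simpa using hcon
        rw [norun _ _ _ hno]
        exact r132 τ h132
  · rintro ⟨hR, h132⟩ hcon
    have hno : ∀ q x', (q ++ [x']) <+: τ →
        ¬ ContainsV ((List.range' 1 k).reverse) A (x' :: q.reverse) := by
      intro q x' hpre hcon2
      apply hR
      have h5 : ContainsV (List.range' 1 k) ((fun a => k - 2 - a) '' A) (q ++ [x']) := by
        apply rev1 k hk A hA
        rw [List.reverse_append]
        simpa using hcon2
      obtain ⟨r, hr⟩ := hpre
      rw [← hr]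
      exact contains_append h5
    rw [norun _ _ _ hno] at hcon
    exact h132 (r231 τ hcon)

/-- For k ≥ 3 and any vincular pattern σ whose underlying permutation is k(k-1)⋯1 with
adjacency-constraint set `A`, we have Sort_n(sc_σ) = Av_n(rev(σ), 132), where `rev σ` has
underlying permutation 12⋯k and reversed adjacency constraints. -/
theorem sortingClass_decreasing_vincular (k : ℕ) (hk : 3 ≤ k) (A : Set ℕ)
    (hA : ∀ a ∈ A, a + 2 ≤ k) (n : ℕ) :
    SortSet ((List.range' 1 k).reverse) A n =
      {τ | IsPermList n τ ∧
        ¬ ContainsV (List.range' 1 k) ((fun a => k - 2 - a) '' A) τ ∧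
        ¬ ContainsV [1, 3, 2] ∅ τ} := by
  ext τ
  simp only [SortSet, Set.mem_setOf_eq]
  constructor
  · rintro ⟨hp, h⟩
    obtain ⟨h1, h2⟩ := (key_equiv k hk A hA τ).mp h
    exact ⟨hp, h1, h2⟩
  · rintro ⟨hp, h1, h2⟩
    exact ⟨hp, (key_equiv k hk A hA τ).mpr ⟨h1, h2⟩⟩
end

section
/- For every n, the set of permutations of length n avoiding both the vincular pattern 1\underline{23} and the classical pattern 132 equals the set of permutations of length n avoiding both the consecutive pattern \underline{123} and the classical pattern 132; that is, Av_n(1\underline{23}, 132) = Av_n(\underline{123}, 132). -/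
lemma strictMono_vec3 {m : ℕ} (a b c : Fin m) (h1 : a < b) (h2 : b < c) :
    StrictMono ![a, b, c] := by
  intro x y hxy
  fin_cases x <;> fin_cases y <;>
    first
      | exact absurd hxy (by decide)
      | exact h1
      | exact h2
      | exact h1.trans h2

lemma key_vincular (τ : List ℕ) (hnd : τ.Nodup) (h132 : ¬ ContainsV [1, 3, 2] ∅ τ)
    (h : ContainsV [1, 2, 3] {1} τ) : ContainsV [1, 2, 3] {0, 1} τ := by
  obtain ⟨f, hmono, hiso, hadj⟩ := h
  have p0 : 0 < ([1,2,3] : List ℕ).length := by norm_num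
  have p1 : 1 < ([1,2,3] : List ℕ).length := by norm_num
  have p2 : 2 < ([1,2,3] : List ℕ).length := by norm_num
  have hadj1 : (f ⟨2, p2⟩ : ℕ) = (f ⟨1, p1⟩ : ℕ) + 1 := hadj 1 rfl p2
  have h01 : (f ⟨0, p0⟩ : ℕ) < (f ⟨1, p1⟩ : ℕ) := hmono (Fin.mk_lt_mk.mpr (by norm_num))
  have h12f : f ⟨1, p1⟩ < f ⟨2, p2⟩ := hmono (Fin.mk_lt_mk.mpr (by norm_num))
  have hx : τ.get (f ⟨0, p0⟩) < τ.get (f ⟨1, p1⟩) :=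
    (hiso ⟨0, p0⟩ ⟨1, p1⟩).mp (by norm_num)
  have hy : τ.get (f ⟨1, p1⟩) < τ.get (f ⟨2, p2⟩) :=
    (hiso ⟨1, p1⟩ ⟨2, p2⟩).mp (by norm_num)
  by_cases hcase : (f ⟨1, p1⟩ : ℕ) = (f ⟨0, p0⟩ : ℕ) + 1
  · refine ⟨f, hmono, hiso, ?_⟩
    intro a ha h
    rcases ha with ha | ha
    · subst ha; exact hcase
    · simp only [Set.mem_singleton_iff] at ha; subst ha; exact hadj1
  · have hklt : (f ⟨1, p1⟩ : ℕ) - 1 < τ.length := by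
      have := (f ⟨1, p1⟩).2; omega
    by_cases hc2 : τ.get ⟨(f ⟨1, p1⟩ : ℕ) - 1, hklt⟩ < τ.get (f ⟨1, p1⟩)
    · refine ⟨![⟨(f ⟨1, p1⟩ : ℕ) - 1, hklt⟩, f ⟨1, p1⟩, f ⟨2, p2⟩], ?_, ?_, ?_⟩
      · refine strictMono_vec3 _ _ _
          (Fin.lt_def.mpr (show (f ⟨1, p1⟩ : ℕ) - 1 < (f ⟨1, p1⟩ : ℕ) by omega)) h12f
      · intro a b
        fin_cases a <;> fin_cases b
        · exact iff_of_false (by decide) (lt_irrefl _)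
        · exact iff_of_true (by decide) hc2
        · exact iff_of_true (by decide) (hc2.trans hy)
        · exact iff_of_false (by decide) (lt_asymm hc2)
        · exact iff_of_false (by decide) (lt_irrefl _)
        · exact iff_of_true (by decide) hy
        · exact iff_of_false (by decide) (lt_asymm (hc2.trans hy))
        · exact iff_of_false (by decide) (lt_asymm hy)
        · exact iff_of_false (by decide) (lt_irrefl _)
      · intro a ha h
        rcases ha with rfl | ha
        · exact (by omega : (f ⟨1, p1⟩ : ℕ) = ((f ⟨1, p1⟩ : ℕ) - 1) + 1)
        · simp only [Set.mem_singleton_iff] at ha; subst ha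
          exact hadj1
    · exfalso
      have hne : τ.get ⟨(f ⟨1, p1⟩ : ℕ) - 1, hklt⟩ ≠ τ.get (f ⟨1, p1⟩) := by
        intro he
        have h2 : (f ⟨1, p1⟩ : ℕ) - 1 = (f ⟨1, p1⟩ : ℕ) :=
          congrArg Fin.val ((List.Nodup.get_inj_iff hnd).mp he)
        omega
      have hgt : τ.get (f ⟨1, p1⟩) < τ.get ⟨(f ⟨1, p1⟩ : ℕ) - 1, hklt⟩ :=
        lt_of_le_of_ne (not_lt.mp hc2) hne.symm
      apply h132
      refine ⟨![f ⟨0, p0⟩, ⟨(f ⟨1, p1⟩ : ℕ) - 1, hklt⟩, f ⟨1, p1⟩], ?_, ?_, ?_⟩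
      · refine strictMono_vec3 _ _ _
          (Fin.lt_def.mpr (show (f ⟨0, p0⟩ : ℕ) < (f ⟨1, p1⟩ : ℕ) - 1 by omega))
          (Fin.lt_def.mpr (show (f ⟨1, p1⟩ : ℕ) - 1 < (f ⟨1, p1⟩ : ℕ) by omega))
      · intro a b
        fin_cases a <;> fin_cases b
        · exact iff_of_false (by decide) (lt_irrefl _)
        · exact iff_of_true (by decide) (hx.trans hgt)
        · exact iff_of_true (by decide) hx
        · exact iff_of_false (by decide) (lt_asymm (hx.trans hgt))
        · exact iff_of_false (by decide) (lt_irrefl _)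
        · exact iff_of_false (by decide) (lt_asymm hgt)
        · exact iff_of_false (by decide) (lt_asymm hx)
        · exact iff_of_true (by decide) hgt
        · exact iff_of_false (by decide) (lt_irrefl _)
      · intro a ha h
        exact absurd ha (Set.notMem_empty a)

/-- Av_n(1\un{23}, 132) = Av_n(\un{123}, 132). -/
theorem av_1un23_eq_av_un123 (n : ℕ) :
    {τ | IsPermList n τ ∧ ¬ ContainsV [1, 2, 3] {1} τ ∧ ¬ ContainsV [1, 3, 2] ∅ τ} =
      {τ | IsPermList n τ ∧ ¬ ContainsV [1, 2, 3] {0, 1} τ ∧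
        ¬ ContainsV [1, 3, 2] ∅ τ} := by
  ext τ
  simp only [Set.mem_setOf_eq]
  constructor
  · rintro ⟨hp, h1, h2⟩
    refine ⟨hp, ?_, h2⟩
    intro hc
    apply h1
    obtain ⟨f, hmono, hiso, hadj⟩ := hc
    exact ⟨f, hmono, hiso, fun a ha h => hadj a (Or.inr ha) h⟩
  · rintro ⟨hp, h1, h2⟩
    have hnd : τ.Nodup := hp.nodup_iff.mpr (List.nodup_range' (s := 1) (n := n))
    exact ⟨hp, fun hc => h1 (key_vincular τ hnd h2 hc), h2⟩
end

section
/- For every n, the sorting class of the \underline{32}1-avoiding stack-sorting map equals the set of permutations of length n avoiding the consecutive pattern \underline{123} and the classical pattern 132; that is, Sort_n(sc_{\underline{32}1}) = Av_n(\underline{123}, 132). -/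
open scoped List

section Patterns

variable {l l₁ l₂ : List ℕ}

def Has231 (l : List ℕ) : Prop := ∃ a b c, [a, b, c] <+ l ∧ c < a ∧ a < b

def Has132 (l : List ℕ) : Prop := ∃ a b c, [a, b, c] <+ l ∧ a < c ∧ c < b

def HasConsec123 (l : List ℕ) : Prop := ∃ a b c, [a, b, c] <:+: l ∧ a < b ∧ b < c

def HasVinc321 (l : List ℕ) : Prop := ∃ a b R, a :: b :: R <:+ l ∧ ∃ c ∈ R, c < b ∧ b < a

theorem forall_fin_three_lt_iff {p q r x y z : ℕ} :
    (∀ a b : Fin 3, ![p, q, r] a < ![p, q, r] b ↔ ![x, y, z] a < ![x, y, z] b) ↔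
      (p < q ↔ x < y) ∧ (q < p ↔ y < x) ∧ (p < r ↔ x < z) ∧ (r < p ↔ z < x) ∧
      (q < r ↔ y < z) ∧ (r < q ↔ z < y) := by
  refine ⟨fun h => ⟨h 0 1, h 1 0, h 0 2, h 2 0, h 1 2, h 2 1⟩, fun h a b => ?_⟩
  fin_cases a <;> fin_cases b <;> simp [h]

theorem containsV_three_iff {p q r : ℕ} {A : Set ℕ} :
    ContainsV [p, q, r] A l ↔ ∃ i j k, ∃ (_ : i < j) (_ : j < k) (_ : k < l.length),
      (∀ a b : Fin 3, ![p, q, r] a < ![p, q, r] b ↔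
        ![l[i], l[j], l[k]] a < ![l[i], l[j], l[k]] b) ∧
      (0 ∈ A → j = i + 1) ∧ (1 ∈ A → k = j + 1) := by
  constructor
  · rintro ⟨f, hf, hiso, hadj⟩
    refine ⟨f 0, f 1, f 2, hf (show (0 : Fin 3) < 1 by decide),
      hf (show (1 : Fin 3) < 2 by decide), (f 2).isLt, fun a b => ?_,
      fun h => hadj 0 h (by simp), fun h => hadj 1 h (by simp)⟩
    have := hiso a b
    fin_cases a <;> fin_cases b <;> exact this
  · rintro ⟨i, j, k, hij, hjk, hk, hiso, h0, h1⟩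
    refine ⟨![⟨i, by omega⟩, ⟨j, by omega⟩, ⟨k, hk⟩], Fin.strictMono_iff_lt_succ.2 ?_,
      fun a b => ?_, fun a ha h => ?_⟩
    · intro a
      fin_cases a
      exacts [hij, hjk]
    · have := hiso a b
      fin_cases a <;> fin_cases b <;> exact this
    · obtain rfl | rfl : a = 0 ∨ a = 1 := by
        simp only [List.length_cons, List.length_nil] at h
        omega
      exacts [h0 ha, h1 ha]

theorem containsV_three_empty_iff {p q r : ℕ} :
    ContainsV [p, q, r] ∅ l ↔ ∃ x y z, [x, y, z] <+ l ∧
      ∀ a b : Fin 3, ![p, q, r] a < ![p, q, r] b ↔ ![x, y, z] a < ![x, y, z] b := by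
  rw [containsV_three_iff]
  constructor
  · rintro ⟨i, j, k, hij, hjk, hk, hiso, -⟩
    refine ⟨_, _, _, List.sublist_iff_exists_fin_orderEmbedding_get_eq.2
      ⟨OrderEmbedding.ofStrictMono ![⟨i, by omega⟩, ⟨j, by omega⟩, ⟨k, hk⟩]
        (Fin.strictMono_iff_lt_succ.2 ?_), ?_⟩, hiso⟩
    · intro a
      fin_cases a
      exacts [hij, hjk]
    · intro a
      fin_cases a <;> rfl
  · rintro ⟨x, y, z, hsub, hiso⟩
    obtain ⟨f, hf⟩ := List.sublist_iff_exists_fin_orderEmbedding_get_eq.1 hsub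
    refine ⟨f 0, f 1, f 2, f.strictMono (show (0 : Fin 3) < 1 by decide),
      f.strictMono (show (1 : Fin 3) < 2 by decide), (f 2).isLt, ?_, by simp, by simp⟩
    simp only [← List.get_eq_getElem, ← hf]
    exact hiso

theorem containsV_231_iff : ContainsV [2, 3, 1] ∅ l ↔ Has231 l := by
  rw [containsV_three_empty_iff]
  refine exists₃_congr fun x y z => and_congr_right fun _ => ?_
  rw [forall_fin_three_lt_iff]
  omega

theorem containsV_132_iff : ContainsV [1, 3, 2] ∅ l ↔ Has132 l := by
  rw [containsV_three_empty_iff]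
  refine exists₃_congr fun x y z => and_congr_right fun _ => ?_
  rw [forall_fin_three_lt_iff]
  omega

theorem containsV_321_iff : ContainsV [3, 2, 1] {0} l ↔ HasVinc321 l := by
  rw [containsV_three_iff]
  constructor
  · rintro ⟨i, j, k, hij, hjk, hk, hiso, hadj, -⟩
    obtain rfl : j = i + 1 := hadj rfl
    rw [forall_fin_three_lt_iff] at hiso
    refine ⟨l[i], l[i + 1], l.drop (i + 2), ?_, l[k], ?_, by omega, by omega⟩
    · have h : l.drop i = l[i] :: l[i + 1] :: l.drop (i + 2) := by
        rw [List.drop_eq_getElem_cons, List.drop_eq_getElem_cons]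
      rw [← h]
      exact List.drop_suffix i l
    · have h : (l.drop (i + 2))[k - (i + 2)]'(by simp; omega) = l[k] := by
        simp only [List.getElem_drop]
        congr 1
        omega
      exact h ▸ List.getElem_mem _
  · rintro ⟨a, b, R, ⟨P, rfl⟩, c, hc, hcb, hba⟩
    obtain ⟨m, hm, rfl⟩ := List.getElem_of_mem hc
    have hk : P.length + (m + 2) < (P ++ a :: b :: R).length := by simp; omega
    refine ⟨P.length, P.length + 1, P.length + (m + 2), by omega, by omega, hk, ?_,
      fun _ => rfl, by simp⟩
    have ha : (P ++ a :: b :: R)[P.length] = a := by simp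
    have hb : (P ++ a :: b :: R)[P.length + 1] = b := by simp
    have hc : (P ++ a :: b :: R)[P.length + (m + 2)] = R[m] := by simp
    rw [forall_fin_three_lt_iff, ha, hb, hc]
    omega

theorem containsV_123_iff : ContainsV [1, 2, 3] {0, 1} l ↔ HasConsec123 l := by
  rw [containsV_three_iff]
  constructor
  · rintro ⟨i, j, k, hij, hjk, hk, hiso, h0, h1⟩
    obtain rfl : j = i + 1 := h0 (by simp)
    obtain rfl : k = i + 1 + 1 := h1 (by simp)
    rw [forall_fin_three_lt_iff] at hiso
    refine ⟨l[i], l[i + 1], l[i + 1 + 1], ?_, by omega, by omega⟩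
    have h : l.drop i = [l[i], l[i + 1], l[i + 1 + 1]] ++ l.drop (i + 1 + 1 + 1) := by
      rw [List.drop_eq_getElem_cons, List.drop_eq_getElem_cons, List.drop_eq_getElem_cons]
      rfl
    exact (h ▸ List.prefix_append _ _).isInfix.trans (List.drop_suffix i l).isInfix
  · rintro ⟨a, b, c, ⟨s, t, rfl⟩, hab, hbc⟩
    have hk : s.length + 2 < (s ++ [a, b, c] ++ t).length := by simp
    refine ⟨s.length, s.length + 1, s.length + 2, by omega, by omega, hk, ?_,
      fun _ => rfl, fun _ => rfl⟩
    have ha : (s ++ [a, b, c] ++ t)[s.length] = a := by simp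
    have hb : (s ++ [a, b, c] ++ t)[s.length + 1] = b := by simp
    have hc : (s ++ [a, b, c] ++ t)[s.length + 2] = c := by simp
    rw [forall_fin_three_lt_iff, ha, hb, hc]
    omega

theorem has231_reverse : Has231 l.reverse ↔ Has132 l := by
  constructor
  · rintro ⟨a, b, c, h, hca, hab⟩
    exact ⟨c, b, a, by simpa using List.sublist_reverse_iff.1 h, hca, hab⟩
  · rintro ⟨a, b, c, h, hac, hcb⟩
    exact ⟨c, b, a, List.sublist_reverse_iff.2 (by simpa using h), hac, hcb⟩

theorem Has231.cons (y : ℕ) : Has231 l → Has231 (y :: l)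
  | ⟨a, b, c, h, hca, hab⟩ => ⟨a, b, c, h.cons y, hca, hab⟩

theorem HasVinc321.mono (h : HasVinc321 l₁) (hl : l₁ <:+ l₂) : HasVinc321 l₂ :=
  let ⟨a, b, R, hs, hc⟩ := h
  ⟨a, b, R, hs.trans hl, hc⟩

theorem HasVinc321.three_le_length (h : HasVinc321 l) : 3 ≤ l.length := by
  obtain ⟨a, b, R, hs, c, hc, -⟩ := h
  have hR := List.length_pos_of_mem hc
  have hs := hs.length_le
  simp only [List.length_cons] at hs
  omega

theorem hasVinc321_cons_cons_iff {x y : ℕ} {S : List ℕ} :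
    HasVinc321 (x :: y :: S) ↔ (y < x ∧ ∃ c ∈ S, c < y) ∨ HasVinc321 (y :: S) := by
  constructor
  · rintro ⟨a, b, R, hs, c, hc, hcb, hba⟩
    rcases List.suffix_cons_iff.1 hs with h | h
    · obtain ⟨rfl, rfl, rfl⟩ : a = x ∧ b = y ∧ R = S := by simpa using h
      exact Or.inl ⟨hba, c, hc, hcb⟩
    · exact Or.inr ⟨a, b, R, h, c, hc, hcb, hba⟩
  · rintro (⟨hyx, c, hc, hcy⟩ | h)
    · exact ⟨x, y, S, List.suffix_refl _, c, hc, hcy, hyx⟩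
    · exact h.mono (List.suffix_cons x _)

theorem HasConsec123.hasVinc321_reverse (h : HasConsec123 l) : HasVinc321 l.reverse := by
  obtain ⟨a, b, c, hi, hab, hbc⟩ := h
  obtain ⟨s, t, ht⟩ := hi.reverse
  exact ⟨c, b, a :: t, ⟨s, by simpa using ht⟩, a, List.mem_cons_self, hab, hbc⟩

theorem hasConsec123_or_has132_of_hasVinc321_reverse (hl : l.Nodup)
    (h : HasVinc321 l.reverse) : HasConsec123 l ∨ Has132 l := by
  obtain ⟨a, b, R, ⟨P, hP⟩, c, hc, hcb, hba⟩ := h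
  obtain _ | ⟨d, R⟩ := R
  · simp at hc
  rcases lt_trichotomy d b with hdb | rfl | hbd
  · exact Or.inl ⟨d, b, a, List.reverse_infix.1 ⟨P, R, by simpa using hP⟩, hdb, hba⟩
  · have hnd : (P ++ a :: d :: d :: R).Nodup := hP ▸ List.nodup_reverse.2 hl
    simp [List.nodup_append, List.nodup_cons] at hnd
  · have hcR : c ∈ R := (List.mem_cons.1 hc).resolve_left (by omega)
    refine Or.inr (has231_reverse.1 ⟨b, d, c, ?_, hcb, hbd⟩)
    rw [← hP]
    exact (((List.singleton_sublist.2 hcR).cons_cons d).cons_cons b |>.cons a).trans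
      (List.sublist_append_right P _)

end Patterns

section Machine

theorem scAux_nil_right (σ : List ℕ) (A : Set ℕ) (stack : List ℕ) :
    scAux σ A stack [] = stack := by
  cases stack <;> rw [scAux]

theorem sublist_scAux (σ : List ℕ) (A : Set ℕ) (stack input : List ℕ) :
    stack <+ scAux σ A stack input := by
  fun_induction scAux σ A stack input with
  | case1 => exact .refl _
  | case2 x rest ih => exact (List.nil_sublist _).trans ih
  | case3 y S x rest _ ih => exact ih.cons_cons y
  | case4 y S x rest _ ih => exact (List.sublist_cons_self x _).trans ih

variable {x y : ℕ} {stack S rest : List ℕ}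

theorem scAux_push_s6 (h : ¬HasVinc321 (x :: stack)) :
    scAux [3, 2, 1] {0} stack (x :: rest) = scAux [3, 2, 1] {0} (x :: stack) rest := by
  cases stack with
  | nil => rw [scAux]
  | cons y S => rw [scAux, if_neg (containsV_321_iff.not.2 h)]

theorem scAux_pop_s6 (h : HasVinc321 (x :: y :: S)) :
    scAux [3, 2, 1] {0} (y :: S) (x :: rest) = y :: scAux [3, 2, 1] {0} S (x :: rest) := by
  rw [scAux, if_pos (containsV_321_iff.2 h)]

theorem scAux_eq_of_not_hasVinc321 (input : List ℕ) (h : ¬HasVinc321 (input.reverse ++ stack)) :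
    scAux [3, 2, 1] {0} stack input = input.reverse ++ stack := by
  induction input generalizing stack with
  | nil => simp [scAux_nil_right]
  | cons x rest ih =>
    simp only [List.reverse_cons, List.append_assoc, List.singleton_append] at h ⊢
    rw [scAux_push_s6 (fun h' => h (h'.mono (List.suffix_append _ _))), ih h]

theorem has231_scAux_cons (hS : ¬HasVinc321 stack) (h : HasVinc321 (x :: stack)) :
    Has231 (scAux [3, 2, 1] {0} stack (x :: rest)) := by
  induction stack with
  | nil => simpa using h.three_le_length
  | cons y S ih =>
    rw [scAux_pop_s6 h]
    obtain ⟨hyx, c, hc, hcy⟩ := (hasVinc321_cons_cons_iff.1 h).resolve_right hS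
    by_cases hxS : HasVinc321 (x :: S)
    · exact (ih (fun h' => hS (h'.mono (List.suffix_cons y S))) hxS).cons y
    · rw [scAux_push_s6 hxS]
      exact ⟨y, x, c, (((List.singleton_sublist.2 hc).cons_cons x).trans
        (sublist_scAux _ _ _ rest)).cons_cons y, hcy, hyx⟩

theorem has231_scAux (input : List ℕ) (hS : ¬HasVinc321 stack)
    (h : HasVinc321 (input.reverse ++ stack)) : Has231 (scAux [3, 2, 1] {0} stack input) := by
  induction input generalizing stack with
  | nil => exact absurd (by simpa using h) hS
  | cons x rest ih =>
    simp only [List.reverse_cons, List.append_assoc, List.singleton_append] at h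
    by_cases hx : HasVinc321 (x :: stack)
    · exact has231_scAux_cons hS hx
    · rw [scAux_push_s6 hx]
      exact ih hx h

theorem sc_eq_reverse {τ : List ℕ} (h : ¬HasVinc321 τ.reverse) :
    sc [3, 2, 1] {0} τ = τ.reverse := by
  rw [sc]
  simpa using scAux_eq_of_not_hasVinc321 (stack := []) τ (by simpa using h)

theorem has231_sc {τ : List ℕ} (h : HasVinc321 τ.reverse) : Has231 (sc [3, 2, 1] {0} τ) :=
  has231_scAux τ (fun h' => by simpa using h'.three_le_length) (by simpa using h)

end Machine

/-- Sort_n(sc_{\un{32}1}) = Av_n(\un{123}, 132). -/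
theorem sortingClass_un321 (n : ℕ) :
    SortSet [3, 2, 1] {0} n =
      {τ | IsPermList n τ ∧ ¬ ContainsV [1, 2, 3] {0, 1} τ ∧
        ¬ ContainsV [1, 3, 2] ∅ τ} := by
  ext τ
  simp only [SortSet, Set.mem_ofPred_eq, containsV_231_iff, containsV_123_iff, containsV_132_iff]
  refine and_congr_right fun hτ => ?_
  by_cases h : HasVinc321 τ.reverse
  · have hnd : τ.Nodup := hτ.nodup_iff.2 (List.nodup_range' 1)
    simp only [has231_sc h, not_true_eq_false, false_iff, not_and_or, not_not]
    exact hasConsec123_or_has132_of_hasVinc321_reverse hnd h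
  · rw [sc_eq_reverse h, has231_reverse]
    exact ⟨fun h132 => ⟨fun h123 => h h123.hasVinc321_reverse, h132⟩, And.right⟩
end

section
/- For every n, the set of permutations of length n avoiding both the vincular pattern \underline{12}3 and the classical pattern 132 equals the set of permutations of length n avoiding both classical patterns 123 and 132; that is, Av_n(\underline{12}3, 132) = Av_n(123, 132). -/
/-!
If `τ` avoids `132`, an occurrence `τᵢ < τⱼ < τₖ` of `123` can be shifted until its first two
positions are adjacent: for `m = i + 1 < j`, either `τₘ < τᵢ` and `(m, j, k)` is an occurrence
with a shorter gap, or `τᵢ < τₘ` and `(i, m, k)` is an occurrence of `\underline{12}3` or of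
`132`, according as `τₘ < τₖ` or `τₖ < τₘ`.
-/

lemma IsPermList.nodup {n : ℕ} {τ : List ℕ} (h : IsPermList n τ) : τ.Nodup :=
  h.nodup_iff.mpr List.nodup_range'

lemma ContainsV.of_subset {σ : List ℕ} {A B : Set ℕ} {τ : List ℕ} (hAB : A ⊆ B)
    (h : ContainsV σ B τ) : ContainsV σ A τ :=
  h.imp fun _ ⟨hmono, hiso, hadj⟩ => ⟨hmono, hiso, fun a ha => hadj a (hAB ha)⟩

lemma ContainsV.exists_123 {A : Set ℕ} {τ : List ℕ} (h : ContainsV [1, 2, 3] A τ) :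
    ∃ i j k : Fin τ.length, i < j ∧ j < k ∧ τ.get i < τ.get j ∧ τ.get j < τ.get k := by
  obtain ⟨f, hmono, hiso, -⟩ := h
  exact ⟨f 0, f 1, f 2, hmono (by decide), hmono (by decide),
    (hiso 0 1).mp (by decide), (hiso 1 2).mp (by decide)⟩

lemma containsV_123_adjacent {τ : List ℕ} {i j k : Fin τ.length} (hij : (j : ℕ) = i + 1)
    (hjk : j < k) (h₁ : τ.get i < τ.get j) (h₂ : τ.get j < τ.get k) :
    ContainsV [1, 2, 3] {0} τ := by
  simp only [List.get_eq_getElem] at h₁ h₂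
  refine ⟨![i, j, k], Fin.strictMono_iff_lt_succ.mpr fun a => ?_, fun a b => ?_, ?_⟩
  · fin_cases a <;> simp <;> omega
  · fin_cases a <;> fin_cases b <;> simp <;> omega
  · intro a ha _
    simp_all

lemma containsV_132 {τ : List ℕ} {i j k : Fin τ.length} (hij : i < j) (hjk : j < k)
    (h₁ : τ.get i < τ.get k) (h₂ : τ.get k < τ.get j) :
    ContainsV [1, 3, 2] ∅ τ := by
  simp only [List.get_eq_getElem] at h₁ h₂
  refine ⟨![i, j, k], Fin.strictMono_iff_lt_succ.mpr fun a => ?_, fun a b => ?_,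
    fun a ha => ha.elim⟩
  · fin_cases a <;> simpa
  · fin_cases a <;> fin_cases b <;> simp <;> omega

lemma containsV_123_adjacent_of_not_132 {τ : List ℕ} (hτ : τ.Nodup)
    (h132 : ¬ ContainsV [1, 3, 2] ∅ τ) {i j k : Fin τ.length} (hij : i < j) (hjk : j < k)
    (h₁ : τ.get i < τ.get j) (h₂ : τ.get j < τ.get k) : ContainsV [1, 2, 3] {0} τ := by
  have hinj : Function.Injective τ.get := List.nodup_iff_injective_get.mp hτ
  obtain ⟨d, hd⟩ : ∃ d, (j : ℕ) = i + d + 1 := ⟨j - i - 1, by omega⟩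
  clear hij
  induction d generalizing i with
  | zero => exact containsV_123_adjacent hd hjk h₁ h₂
  | succ d ih =>
    let m : Fin τ.length := ⟨i + 1, by omega⟩
    have hm : (m : ℕ) = i + 1 := rfl
    have him : i < m := Fin.lt_def.mpr (by omega)
    have hmk : m < k := Fin.lt_def.mpr (by omega)
    rcases lt_or_gt_of_ne (hinj.ne him.ne') with hmi | him'
    · exact ih (hmi.trans h₁) (by omega)
    rcases lt_or_gt_of_ne (hinj.ne hmk.ne) with hmk' | hkm
    · exact containsV_123_adjacent rfl hmk him' hmk'
    · exact absurd (containsV_132 him hmk (h₁.trans h₂) hkm) h132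

lemma containsV_123_adjacent_iff_of_not_132 {τ : List ℕ} (hτ : τ.Nodup)
    (h132 : ¬ ContainsV [1, 3, 2] ∅ τ) :
    ContainsV [1, 2, 3] {0} τ ↔ ContainsV [1, 2, 3] ∅ τ := by
  refine ⟨ContainsV.of_subset (Set.empty_subset _), fun h => ?_⟩
  obtain ⟨i, j, k, hij, hjk, h₁, h₂⟩ := h.exists_123
  exact containsV_123_adjacent_of_not_132 hτ h132 hij hjk h₁ h₂

/-- Av_n(\un{12}3, 132) = Av_n(123, 132). -/
theorem av_un123_eq_av_123 (n : ℕ) :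
    {τ | IsPermList n τ ∧ ¬ ContainsV [1, 2, 3] {0} τ ∧ ¬ ContainsV [1, 3, 2] ∅ τ} =
      {τ | IsPermList n τ ∧ ¬ ContainsV [1, 2, 3] ∅ τ ∧
        ¬ ContainsV [1, 3, 2] ∅ τ} :=
  Set.ext fun _ => and_congr_right fun hτ => and_congr_left fun h132 =>
    not_congr (containsV_123_adjacent_iff_of_not_132 hτ.nodup h132)
end

section
/- For every n, the sorting class of the 3\underline{21}-avoiding stack-sorting map equals the set of permutations of length n avoiding the classical patterns 123 and 132; that is, Sort_n(sc_{3\underline{21}}) = Av_n(123, 132). -/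
section Aux

/-- index congruence for `getElem`. -/
theorem gec {l : List ℕ} {i j : ℕ} (h : i = j) (hi : i < l.length) (hj : j < l.length) :
    l[i]'hi = l[j]'hj := by subst h; rfl

theorem ContainsV.consPat {σ : List ℕ} {A : Set ℕ} {τ : List ℕ} (y : ℕ)
    (h : ContainsV σ A τ) : ContainsV σ A (y :: τ) := by
  obtain ⟨f, hm, hi, ha⟩ := h
  refine ⟨fun a => (f a).succ, fun a b hab => ?_, fun a b => ?_, fun a haA h' => ?_⟩
  · exact Fin.succ_lt_succ_iff.mpr (hm hab)
  · have := hi a b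
    simpa [List.get_eq_getElem, Fin.val_succ, List.getElem_cons_succ] using this
  · have := ha a haA h'
    simp only [Fin.val_succ]
    omega

theorem c123_iff (τ : List ℕ) :
    ContainsV [1,2,3] ∅ τ ↔ ∃ (a b c : ℕ) (ha : a < τ.length) (hb : b < τ.length)
      (hc : c < τ.length), a < b ∧ b < c ∧ τ[a]'ha < τ[b]'hb ∧ τ[b]'hb < τ[c]'hc := by
  constructor
  · rintro ⟨f, hm, hi, -⟩
    have h01 : f ⟨0, by decide⟩ < f ⟨1, by decide⟩ := hm (by decide)
    have h12 : f ⟨1, by decide⟩ < f ⟨2, by decide⟩ := hm (by decide)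
    have e1 := (hi ⟨0, by decide⟩ ⟨1, by decide⟩).mp (by decide)
    have e2 := (hi ⟨1, by decide⟩ ⟨2, by decide⟩).mp (by decide)
    simp only [List.get_eq_getElem] at e1 e2
    exact ⟨f ⟨0, by decide⟩, f ⟨1, by decide⟩, f ⟨2, by decide⟩,
      (f _).isLt, (f _).isLt, (f _).isLt, h01, h12, e1, e2⟩
  · rintro ⟨a, b, c, ha, hb, hc, hab, hbc, h1, h2⟩
    refine ⟨fun u => ⟨if u.1 = 0 then a else if u.1 = 1 then b else c,
      by split_ifs <;> omega⟩, ?_, ?_, by simp⟩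
    · intro u v huv
      have hu := u.isLt; have hv := v.isLt
      simp only [List.length_cons, List.length_nil] at hu hv
      simp only [Fin.lt_def] at huv ⊢
      split_ifs <;> omega
    · rintro ⟨u, hu⟩ ⟨v, hv⟩
      simp only [List.length_cons, List.length_nil] at hu hv
      simp only [List.get_eq_getElem]
      interval_cases u <;> interval_cases v <;> simp <;> omega

theorem c132_iff (τ : List ℕ) :
    ContainsV [1,3,2] ∅ τ ↔ ∃ (a b c : ℕ) (ha : a < τ.length) (hb : b < τ.length)
      (hc : c < τ.length), a < b ∧ b < c ∧ τ[a]'ha < τ[c]'hc ∧ τ[c]'hc < τ[b]'hb := by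
  constructor
  · rintro ⟨f, hm, hi, -⟩
    have h01 : f ⟨0, by decide⟩ < f ⟨1, by decide⟩ := hm (by decide)
    have h12 : f ⟨1, by decide⟩ < f ⟨2, by decide⟩ := hm (by decide)
    have e1 := (hi ⟨0, by decide⟩ ⟨2, by decide⟩).mp (by decide)
    have e2 := (hi ⟨2, by decide⟩ ⟨1, by decide⟩).mp (by decide)
    simp only [List.get_eq_getElem] at e1 e2
    exact ⟨f ⟨0, by decide⟩, f ⟨1, by decide⟩, f ⟨2, by decide⟩,
      (f _).isLt, (f _).isLt, (f _).isLt, h01, h12, e1, e2⟩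
  · rintro ⟨a, b, c, ha, hb, hc, hab, hbc, h1, h2⟩
    refine ⟨fun u => ⟨if u.1 = 0 then a else if u.1 = 1 then b else c,
      by split_ifs <;> omega⟩, ?_, ?_, by simp⟩
    · intro u v huv
      have hu := u.isLt; have hv := v.isLt
      simp only [List.length_cons, List.length_nil] at hu hv
      simp only [Fin.lt_def] at huv ⊢
      split_ifs <;> omega
    · rintro ⟨u, hu⟩ ⟨v, hv⟩
      simp only [List.length_cons, List.length_nil] at hu hv
      simp only [List.get_eq_getElem]
      interval_cases u <;> interval_cases v <;> simp <;> omega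

theorem c231_iff (τ : List ℕ) :
    ContainsV [2,3,1] ∅ τ ↔ ∃ (a b c : ℕ) (ha : a < τ.length) (hb : b < τ.length)
      (hc : c < τ.length), a < b ∧ b < c ∧ τ[c]'hc < τ[a]'ha ∧ τ[a]'ha < τ[b]'hb := by
  constructor
  · rintro ⟨f, hm, hi, -⟩
    have h01 : f ⟨0, by decide⟩ < f ⟨1, by decide⟩ := hm (by decide)
    have h12 : f ⟨1, by decide⟩ < f ⟨2, by decide⟩ := hm (by decide)
    have e1 := (hi ⟨2, by decide⟩ ⟨0, by decide⟩).mp (by decide)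
    have e2 := (hi ⟨0, by decide⟩ ⟨1, by decide⟩).mp (by decide)
    simp only [List.get_eq_getElem] at e1 e2
    exact ⟨f ⟨0, by decide⟩, f ⟨1, by decide⟩, f ⟨2, by decide⟩,
      (f _).isLt, (f _).isLt, (f _).isLt, h01, h12, e1, e2⟩
  · rintro ⟨a, b, c, ha, hb, hc, hab, hbc, h1, h2⟩
    refine ⟨fun u => ⟨if u.1 = 0 then a else if u.1 = 1 then b else c,
      by split_ifs <;> omega⟩, ?_, ?_, by simp⟩
    · intro u v huv
      have hu := u.isLt; have hv := v.isLt
      simp only [List.length_cons, List.length_nil] at hu hv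
      simp only [Fin.lt_def] at huv ⊢
      split_ifs <;> omega
    · rintro ⟨u, hu⟩ ⟨v, hv⟩
      simp only [List.length_cons, List.length_nil] at hu hv
      simp only [List.get_eq_getElem]
      interval_cases u <;> interval_cases v <;> simp <;> omega

theorem pf2 : (1:ℕ) + 1 < ([3,2,1] : List ℕ).length := by decide
theorem pf0 : (0:ℕ) < ([3,2,1] : List ℕ).length := by decide

theorem v321_iff (τ : List ℕ) :
    ContainsV [3,2,1] {1} τ ↔ ∃ (i n : ℕ) (hi : i < τ.length) (hn : n < τ.length)
      (hn1 : n + 1 < τ.length), i < n ∧ τ[n+1]'hn1 < τ[n]'hn ∧ τ[n]'hn < τ[i]'hi := by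
  constructor
  · rintro ⟨f, hm, hi, hadj⟩
    have hadj1 := hadj 1 rfl pf2
    have h01 : f ⟨0, pf0⟩ < f ⟨1, Nat.lt_of_succ_lt pf2⟩ := hm (by decide)
    have e1 := (hi ⟨1, Nat.lt_of_succ_lt pf2⟩ ⟨0, pf0⟩).mp (by decide)
    have e2 := (hi ⟨1+1, pf2⟩ ⟨1, Nat.lt_of_succ_lt pf2⟩).mp (by decide)
    simp only [List.get_eq_getElem] at e1 e2
    refine ⟨(f ⟨0, pf0⟩ : ℕ), (f ⟨1, Nat.lt_of_succ_lt pf2⟩ : ℕ),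
      (f _).isLt, (f _).isLt, ?_, h01, ?_, e1⟩
    · rw [← hadj1]
      exact (f ⟨1+1, pf2⟩).isLt
    · exact lt_of_eq_of_lt (gec hadj1.symm _ _) e2
  · rintro ⟨i, n, hi, hn, hn1, hin, h1, h2⟩
    refine ⟨fun u => ⟨if u.1 = 0 then i else if u.1 = 1 then n else n+1,
      by split_ifs <;> omega⟩, ?_, ?_, ?_⟩
    · intro u v huv
      have hu := u.isLt; have hv := v.isLt
      simp only [List.length_cons, List.length_nil] at hu hv
      simp only [Fin.lt_def] at huv ⊢
      split_ifs <;> omega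
    · rintro ⟨u, hu⟩ ⟨v, hv⟩
      simp only [List.length_cons, List.length_nil] at hu hv
      simp only [List.get_eq_getElem]
      interval_cases u <;> interval_cases v <;> simp <;> omega
    · intro a haA h'
      have ha1 : a = 1 := haA
      subst ha1
      simp

theorem not_contains321_short {τ : List ℕ} (h : τ.length ≤ 2) :
    ¬ ContainsV [3,2,1] {1} τ := by
  intro hc
  obtain ⟨i, n, hi, hn, hn1, hin, -, -⟩ := (v321_iff τ).mp hc
  omega

/-- the push of `x` onto stack `S` is blocked: some adjacent descent of `S` lies below `x`. -/
def BadPush (x : ℕ) (S : List ℕ) : Prop :=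
  ∃ (n : ℕ) (hn : n < S.length) (hn1 : n + 1 < S.length),
    S[n+1]'hn1 < S[n]'hn ∧ S[n]'hn < x

theorem contains321_cons_iff (x : ℕ) (S : List ℕ) :
    ContainsV [3,2,1] {1} (x :: S) ↔ BadPush x S ∨ ContainsV [3,2,1] {1} S := by
  constructor
  · intro h
    obtain ⟨i, m, hi, hm, hm1, him, h1, h2⟩ := (v321_iff _).mp h
    simp only [List.length_cons] at hi hm hm1
    rcases i with _ | i'
    · left
      obtain ⟨n, rfl⟩ : ∃ n, m = n + 1 := ⟨m - 1, by omega⟩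
      refine ⟨n, by omega, by omega, ?_, ?_⟩
      · simpa using h1
      · simpa using h2
    · right
      obtain ⟨n, rfl⟩ : ∃ n, m = n + 1 := ⟨m - 1, by omega⟩
      apply (v321_iff _).mpr
      refine ⟨i', n, by omega, by omega, by omega, by omega, ?_, ?_⟩
      · simpa using h1
      · simpa using h2
  · rintro (⟨n, hn, hn1, h1, h2⟩ | h)
    · apply (v321_iff _).mpr
      refine ⟨0, n+1, by simp, by simp; omega, by simp; omega, by omega, ?_, ?_⟩
      · simpa using h1
      · simpa using h2
    · exact h.consPat x

theorem stack_sublist_aux_s9 : ∀ (N : ℕ) (S inp : List ℕ),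
    S.length + 2 * inp.length ≤ N → List.Sublist S (scAux [3,2,1] {1} S inp) := by
  intro N
  induction N with
  | zero =>
    intro S inp h
    cases inp with
    | nil => rw [scAux]
    | cons x rest => simp only [List.length_cons] at h; omega
  | succ N ih =>
    intro S inp h
    cases inp with
    | nil => rw [scAux]
    | cons x rest =>
      cases S with
      | nil => exact List.nil_sublist _
      | cons y S' =>
        rw [scAux]
        by_cases hc : ContainsV [3,2,1] {1} (x :: y :: S')
        · rw [if_pos hc]
          exact (ih S' (x :: rest)
            (by simp only [List.length_cons] at h ⊢; omega)).cons₂ y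
        · rw [if_neg hc]
          exact (List.sublist_cons_self x (y :: S')).trans
            (ih (x :: y :: S') rest (by simp only [List.length_cons] at h ⊢; omega))

theorem stack_sublist_s9 (S inp : List ℕ) : List.Sublist S (scAux [3,2,1] {1} S inp) :=
  stack_sublist_aux_s9 (S.length + 2 * inp.length) S inp le_rfl

theorem pop_forces (x : ℕ) (rest : List ℕ) :
    ∀ S : List ℕ, ¬ ContainsV [3,2,1] {1} S → BadPush x S →
    ContainsV [2,3,1] ∅ (scAux [3,2,1] {1} S (x :: rest)) := by
  intro S
  induction S with
  | nil =>
    rintro - ⟨n, hn, -, -⟩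
    simp at hn
  | cons y S' ih =>
    intro hg hb
    have hblock : ContainsV [3,2,1] {1} (x :: y :: S') :=
      (contains321_cons_iff x (y :: S')).mpr (Or.inl hb)
    rw [scAux, if_pos hblock]
    by_cases hb' : BadPush x S'
    · exact (ih (fun h => hg (h.consPat y)) hb').consPat y
    · obtain ⟨n, hn, hn1, h1, h2⟩ := hb
      have hn0 : n = 0 := by
        by_contra h0
        apply hb'
        obtain ⟨m, rfl⟩ : ∃ m, n = m + 1 := ⟨n - 1, by omega⟩
        simp only [List.length_cons] at hn hn1
        exact ⟨m, by omega, by omega, by simpa using h1, by simpa using h2⟩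
      subst hn0
      cases S' with
      | nil => simp at hn1
      | cons z S'' =>
        have hzy : z < y := by simpa using h1
        have hyx : y < x := by simpa using h2
        have hpush : ¬ ContainsV [3,2,1] {1} (x :: z :: S'') := by
          intro hcon
          rcases (contains321_cons_iff x (z :: S'')).mp hcon with hbad | hS
          · exact hb' hbad
          · exact hg (hS.consPat y)
        rw [scAux, if_neg hpush]
        have hsub : List.Sublist [x, z] (scAux [3,2,1] {1} (x :: z :: S'') rest) :=
          ((List.nil_sublist S'').cons₂ z |>.cons₂ x).trans
            (stack_sublist_s9 (x :: z :: S'') rest)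
        obtain ⟨is, hmap, hpair⟩ := List.sublist_eq_map_getElem hsub
        rcases is with _ | ⟨i, _ | ⟨j, _ | ⟨k, tl⟩⟩⟩
        · simp at hmap
        · simp at hmap
        · simp only [List.map_cons, List.map_nil, List.cons.injEq, and_true] at hmap
          obtain ⟨hx, hz⟩ := hmap
          have hij : (i:ℕ) < (j:ℕ) := by
            have := List.pairwise_pair.mp hpair
            exact this
          have hib := i.isLt
          have hjb := j.isLt
          apply (c231_iff _).mpr
          refine ⟨0, (i:ℕ)+1, (j:ℕ)+1, by simp, by simp only [List.length_cons]; omega,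
            by simp only [List.length_cons]; omega, by omega, by omega, ?_, ?_⟩
          · simp only [List.getElem_cons_succ, List.getElem_cons_zero]
            rw [← Fin.getElem_fin, ← hz]
            exact hzy
          · simp only [List.getElem_cons_succ, List.getElem_cons_zero]
            rw [← Fin.getElem_fin, ← hx]
            exact hyx
        · simp at hmap

theorem getElem_revApp_left (S T : List ℕ) {i k : ℕ} (hk : k < S.length)
    (hik : i + k + 1 = S.length) {hi : i < (S.reverse ++ T).length} :
    (S.reverse ++ T)[i]'hi = S[k]'hk := by
  rw [List.getElem_append_left (by simp; omega)]
  rw [List.getElem_reverse]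
  exact gec (by omega) _ _

theorem getElem_revApp_right (S T : List ℕ) {m : ℕ} (hm : m < T.length)
    {h : S.length + m < (S.reverse ++ T).length} :
    (S.reverse ++ T)[S.length + m]'h = T[m]'hm := by
  rw [List.getElem_append_right (by simp)]
  exact gec (by simp) _ _

theorem bad_gives_123 {x : ℕ} {S rest : List ℕ} (hb : BadPush x S) :
    ContainsV [1,2,3] ∅ (S.reverse ++ (x :: rest)) := by
  obtain ⟨n, hn, hn1, h1, h2⟩ := hb
  apply (c123_iff _).mpr
  have hlen : (S.reverse ++ (x :: rest)).length = S.length + (rest.length + 1) := by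
    simp
  refine ⟨S.length - n - 2, S.length - n - 1, S.length + 0,
    by omega, by omega, by omega, by omega, by omega, ?_, ?_⟩
  · rw [getElem_revApp_left S _ hn1 (by omega), getElem_revApp_left S _ hn (by omega)]
    exact h1
  · rw [getElem_revApp_left S _ hn (by omega),
      getElem_revApp_right S _ (by simp : (0:ℕ) < (x :: rest).length)]
    simpa using h2

theorem run_no123 : ∀ (N : ℕ) (S inp : List ℕ), S.length + 2 * inp.length ≤ N →
    ¬ ContainsV [3,2,1] {1} S → ¬ ContainsV [1,2,3] ∅ (S.reverse ++ inp) →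
    scAux [3,2,1] {1} S inp = inp.reverse ++ S := by
  intro N
  induction N with
  | zero =>
    intro S inp h _ _
    cases inp with
    | nil => rw [scAux]; simp
    | cons x rest => simp only [List.length_cons] at h; omega
  | succ N ih =>
    intro S inp h hg h123
    cases inp with
    | nil => rw [scAux]; simp
    | cons x rest =>
      cases S with
      | nil =>
        rw [scAux]
        rw [ih [x] rest (by simp only [List.length_cons, List.length_nil] at h ⊢; omega)
          (not_contains321_short (by simp)) (by simpa using h123)]
        simp
      | cons y S' =>
        have hnb : ¬ ContainsV [3,2,1] {1} (x :: y :: S') := by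
          intro hcon
          rcases (contains321_cons_iff x (y :: S')).mp hcon with hbad | hS
          · exact h123 (bad_gives_123 hbad)
          · exact hg hS
        rw [scAux, if_neg hnb]
        rw [ih (x :: y :: S') rest (by simp only [List.length_cons] at h ⊢; omega) hnb
          (by
            rw [show (x :: y :: S').reverse ++ rest = (y :: S').reverse ++ (x :: rest) by
              rw [List.reverse_cons, List.append_assoc, List.singleton_append]]
            exact h123)]
        rw [List.reverse_cons, List.append_assoc, List.singleton_append]

theorem good321 (S : List ℕ) (hg : ¬ ContainsV [3,2,1] {1} S) :
    ∀ (d p0 p1 p2 : ℕ) (h0 : p0 < S.length) (h1 : p1 < S.length) (h2 : p2 < S.length),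
      p2 - p1 ≤ d → p0 < p1 → p1 < p2 → S[p2]'h2 < S[p1]'h1 → S[p1]'h1 < S[p0]'h0 →
      ContainsV [2,3,1] ∅ S := by
  intro d
  induction d with
  | zero => intro p0 p1 p2 _ _ _ hd h01 h12 _ _; omega
  | succ d ih =>
    intro p0 p1 p2 h0 h1 h2 hd h01 h12 hv1 hv2
    by_cases hpe : p2 = p1 + 1
    · exact absurd ((v321_iff S).mpr ⟨p0, p1, h0, h1, by omega, h01,
        lt_of_eq_of_lt (gec (by omega) _ _) hv1, hv2⟩) hg
    · have hw : p2 - 1 < S.length := by omega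
      by_cases hc1 : S[p1]'h1 < S[p2-1]'hw
      · exact (c231_iff S).mpr ⟨p1, p2-1, p2, h1, hw, h2, by omega, by omega, hv1, hc1⟩
      · push_neg at hc1
        by_cases hc2 : S[p2]'h2 < S[p2-1]'hw
        · refine absurd ((v321_iff S).mpr ⟨p0, p2-1, h0, hw, by omega, by omega, ?_, ?_⟩) hg
          · exact lt_of_eq_of_lt (gec (by omega) _ _) hc2
          · omega
        · push_neg at hc2
          exact ih p0 p1 (p2-1) h0 h1 hw (by omega) h01 (by omega) (by omega) hv2

theorem run_123 : ∀ (N : ℕ) (S inp : List ℕ), S.length + 2 * inp.length ≤ N →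
    ¬ ContainsV [3,2,1] {1} S → ContainsV [1,2,3] ∅ (S.reverse ++ inp) →
    ContainsV [2,3,1] ∅ (scAux [3,2,1] {1} S inp) := by
  intro N
  induction N with
  | zero =>
    intro S inp h _ h123
    obtain ⟨a, b, c, ha, hb, hc, hab, hbc, -, -⟩ := (c123_iff _).mp h123
    simp only [List.length_append, List.length_reverse] at hc
    cases inp with
    | nil => omega
    | cons x rest => simp only [List.length_cons] at h; omega
  | succ N ih =>
    intro S inp h hg h123
    cases inp with
    | nil =>
      rw [scAux]
      simp only [List.append_nil] at h123
      obtain ⟨a, b, c, ha, hb, hc, hab, hbc, hv1, hv2⟩ := (c123_iff _).mp h123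
      simp only [List.length_reverse] at ha hb hc
      rw [List.getElem_reverse, List.getElem_reverse] at hv1
      rw [List.getElem_reverse, List.getElem_reverse] at hv2
      exact good321 S hg (S.length - 1 - a) (S.length - 1 - c) (S.length - 1 - b)
        (S.length - 1 - a) (by omega) (by omega) (by omega) (by omega) (by omega) (by omega)
        hv1 hv2
    | cons x rest =>
      cases S with
      | nil =>
        rw [scAux]
        exact ih [x] rest (by simp only [List.length_cons, List.length_nil] at h ⊢; omega)
          (not_contains321_short (by simp)) (by simpa using h123)
      | cons y S' =>
        by_cases hc : ContainsV [3,2,1] {1} (x :: y :: S')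
        · have hbad : BadPush x (y :: S') := by
            rcases (contains321_cons_iff x (y :: S')).mp hc with hbad | hS
            · exact hbad
            · exact absurd hS hg
          exact pop_forces x rest (y :: S') hg hbad
        · rw [scAux, if_neg hc]
          refine ih (x :: y :: S') rest (by simp only [List.length_cons] at h ⊢; omega) hc ?_
          rw [show (x :: y :: S').reverse ++ rest = (y :: S').reverse ++ (x :: rest) by
            rw [List.reverse_cons, List.append_assoc, List.singleton_append]]
          exact h123

theorem rev132_to_231 {τ : List ℕ} (h : ContainsV [1,3,2] ∅ τ) :
    ContainsV [2,3,1] ∅ τ.reverse := by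
  obtain ⟨a, b, c, ha, hb, hc, hab, hbc, hv1, hv2⟩ := (c132_iff τ).mp h
  apply (c231_iff _).mpr
  refine ⟨τ.length - 1 - c, τ.length - 1 - b, τ.length - 1 - a,
    by simp; omega, by simp; omega, by simp; omega, by omega, by omega, ?_, ?_⟩
  · rw [List.getElem_reverse, List.getElem_reverse]
    exact lt_of_eq_of_lt (gec (by omega) _ _) (lt_of_lt_of_eq hv1 (gec (by omega) _ _))
  · rw [List.getElem_reverse, List.getElem_reverse]
    exact lt_of_eq_of_lt (gec (by omega) _ _) (lt_of_lt_of_eq hv2 (gec (by omega) _ _))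

theorem rev231_to_132 {τ : List ℕ} (h : ContainsV [2,3,1] ∅ τ.reverse) :
    ContainsV [1,3,2] ∅ τ := by
  obtain ⟨a, b, c, ha, hb, hc, hab, hbc, hv1, hv2⟩ := (c231_iff τ.reverse).mp h
  simp only [List.length_reverse] at ha hb hc
  rw [List.getElem_reverse, List.getElem_reverse] at hv1
  rw [List.getElem_reverse, List.getElem_reverse] at hv2
  apply (c132_iff τ).mpr
  exact ⟨τ.length - 1 - c, τ.length - 1 - b, τ.length - 1 - a,
    by omega, by omega, by omega, by omega, by omega, hv1, hv2⟩

end Aux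

/-- Sort_n(sc_{3\un{21}}) = Av_n(123, 132). -/
theorem sortingClass_3un21 (n : ℕ) :
    SortSet [3, 2, 1] {1} n =
      {τ | IsPermList n τ ∧ ¬ ContainsV [1, 2, 3] ∅ τ ∧
        ¬ ContainsV [1, 3, 2] ∅ τ} := by
  ext τ
  simp only [SortSet, Set.mem_setOf_eq]
  have hscdef : sc [3,2,1] {1} τ = scAux [3,2,1] {1} [] τ := rfl
  constructor
  · rintro ⟨hp, h231⟩
    have h123 : ¬ ContainsV [1,2,3] ∅ τ := by
      intro hx
      apply h231
      rw [hscdef]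
      exact run_123 (2 * τ.length) [] τ (by simp) (not_contains321_short (by simp))
        (by simpa using hx)
    have hrev : sc [3,2,1] {1} τ = τ.reverse := by
      rw [hscdef]
      rw [run_no123 (2 * τ.length) [] τ (by simp) (not_contains321_short (by simp))
        (by simpa using h123)]
      simp
    refine ⟨hp, h123, ?_⟩
    intro h132
    exact h231 (hrev ▸ rev132_to_231 h132)
  · rintro ⟨hp, h123, h132⟩
    have hrev : sc [3,2,1] {1} τ = τ.reverse := by
      rw [hscdef]
      rw [run_no123 (2 * τ.length) [] τ (by simp) (not_contains321_short (by simp))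
        (by simpa using h123)]
      simp
    refine ⟨hp, ?_⟩
    rw [hrev]
    intro h
    exact h132 (rev231_to_132 h)
end
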